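/- arXiv:2510.17178 — 5 statements merged into one kernel-verified Lean document; each statement's English description precedes it below -/
import Mathlib

section
/- (Gaussian-weighted Sobolev inequality) There exists a constant C > 0 such that for every continuously differentiable u : ℝ → ℂ with ∫_ℝ (|u'(β)|² + |u(β)|²)·e^{−β²/2} dβ < ∞, one has for every α ∈ ℝ: |u(α)|·e^{−α²/2} ≤ C·(∫_ℝ (|u'(β)|² + |u(β)|²)·e^{−β²/2} dβ)^{1/2}. -/
open MeasureTheory


private lemma stmt5_auxD (r i r' i' W β a : ℝ) (hW : 0 ≤ W) (ha : 0 ≤ a)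
    (hβ : |β| ≤ 1 + a) :
    |(2 * r * r' + 2 * i * i') * W + (r ^ 2 + i ^ 2) * (W * (-β))|
      ≤ (2 + a) * (((r' ^ 2 + i' ^ 2) + (r ^ 2 + i ^ 2)) * W) := by
  have hA'le : |2 * r * r' + 2 * i * i'| ≤ (r' ^ 2 + i' ^ 2) + (r ^ 2 + i ^ 2) := by
    rw [abs_le]
    constructor <;> nlinarith [sq_nonneg (r + r'), sq_nonneg (i + i'),
      sq_nonneg (r - r'), sq_nonneg (i - i')]
  have hAnn : (0:ℝ) ≤ r ^ 2 + i ^ 2 := by positivity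
  calc |(2 * r * r' + 2 * i * i') * W + (r ^ 2 + i ^ 2) * (W * (-β))|
      ≤ |(2 * r * r' + 2 * i * i') * W| + |(r ^ 2 + i ^ 2) * (W * (-β))| := abs_add_le _ _
    _ = |2 * r * r' + 2 * i * i'| * W + (r ^ 2 + i ^ 2) * W * |β| := by
        rw [abs_mul, abs_mul, abs_mul, abs_neg, abs_of_nonneg hW, abs_of_nonneg hAnn]
        ring
    _ ≤ ((r' ^ 2 + i' ^ 2) + (r ^ 2 + i ^ 2)) * W
          + (r ^ 2 + i ^ 2) * W * (1 + a) := by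
        refine add_le_add (mul_le_mul_of_nonneg_right hA'le hW) ?_
        exact mul_le_mul_of_nonneg_left hβ (mul_nonneg hAnn hW)
    _ ≤ (2 + a) * (((r' ^ 2 + i' ^ 2) + (r ^ 2 + i ^ 2)) * W) := by
        nlinarith [mul_nonneg (mul_nonneg (by linarith : (0:ℝ) ≤ 1 + a)
          (by positivity : (0:ℝ) ≤ r' ^ 2 + i' ^ 2)) hW]

set_option maxHeartbeats 1000000 in
/-- Gaussian-weighted Sobolev inequality: `‖u‖_{𝓛^∞_α} ≲ ‖u‖_{𝓗¹_α}`. -/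
theorem stmt5 :
    ∃ C : ℝ, 0 < C ∧ ∀ u : ℝ → ℂ, ContDiff ℝ 1 u →
      Integrable (fun β : ℝ =>
        (‖deriv u β‖ ^ 2 + ‖u β‖ ^ 2) * Real.exp (-β ^ 2 / 2)) →
      ∀ α : ℝ, ‖u α‖ * Real.exp (-α ^ 2 / 2)
        ≤ C * Real.sqrt (∫ β : ℝ,
            (‖deriv u β‖ ^ 2 + ‖u β‖ ^ 2) * Real.exp (-β ^ 2 / 2)) := by
  refine ⟨2, by norm_num, ?_⟩
  intro u hu hInt α
  have hud : Differentiable ℝ u := hu.differentiable one_ne_zero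
  have hu' : Continuous (deriv u) := hu.continuous_deriv le_rfl
  set w : ℝ → ℝ := fun β => Real.exp (-β ^ 2 / 2) with hwdef
  have hw_pos : ∀ β, 0 < w β := fun β => Real.exp_pos _
  set g : ℝ → ℝ := fun β =>
    (‖deriv u β‖ ^ 2 + ‖u β‖ ^ 2) * w β with hgdef
  have hg_nonneg : ∀ β, 0 ≤ g β := by
    intro β
    exact mul_nonneg (by positivity) (le_of_lt (hw_pos β))
  set N : ℝ := ∫ β : ℝ, g β with hNdef
  have hN_nonneg : 0 ≤ N := integral_nonneg hg_nonneg
  have hg_cont : Continuous g := by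
    apply Continuous.mul
    · exact ((continuous_norm.comp hu').pow 2).add
        ((continuous_norm.comp hud.continuous).pow 2)
    · exact (Real.continuous_exp.comp (by continuity))
  -- interval integrals of g are bounded by N
  have hIle : ∀ a b : ℝ, a ≤ b → (∫ β in a..b, g β) ≤ N := by
    intro a b hab
    rw [intervalIntegral.integral_of_le hab]
    exact setIntegral_le_integral hInt (Filter.Eventually.of_forall hg_nonneg)
  set F : ℝ → ℝ := fun β => ‖u β‖ ^ 2 * w β with hFdef
  have hF_eq : ∀ β, F β = ((u β).re ^ 2 + (u β).im ^ 2) * w β := by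
    intro β
    simp only [hFdef, Complex.sq_norm, Complex.normSq_apply]
    ring_nf
  set D : ℝ → ℝ := fun β =>
    (2 * (u β).re * (deriv u β).re + 2 * (u β).im * (deriv u β).im) * w β
      + ((u β).re ^ 2 + (u β).im ^ 2) * (w β * (-β)) with hDdef
  have hw_deriv : ∀ β : ℝ, HasDerivAt w (w β * (-β)) β := by
    intro β
    have h1 : HasDerivAt (fun β : ℝ => -β ^ 2 / 2) (-β) β := by
      have := ((hasDerivAt_pow 2 β).neg).div_const 2
      simpa using this.congr_deriv (by ring)
    exact h1.exp
  have hre : ∀ β : ℝ, HasDerivAt (fun β => (u β).re) ((deriv u β).re) β := by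
    intro β
    exact (Complex.reCLM.hasFDerivAt.comp_hasDerivAt β (hud β).hasDerivAt)
  have him : ∀ β : ℝ, HasDerivAt (fun β => (u β).im) ((deriv u β).im) β := by
    intro β
    exact (Complex.imCLM.hasFDerivAt.comp_hasDerivAt β (hud β).hasDerivAt)
  have hF_deriv : ∀ β : ℝ, HasDerivAt F (D β) β := by
    intro β
    have hA : HasDerivAt (fun β => (u β).re ^ 2 + (u β).im ^ 2)
        (2 * (u β).re * (deriv u β).re + 2 * (u β).im * (deriv u β).im) β := by
      have := (((hre β).pow 2).add ((him β).pow 2))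
      exact this.congr_deriv (by simp)
    have := hA.mul (hw_deriv β)
    have hFf : F = fun β => ((u β).re ^ 2 + (u β).im ^ 2) * w β := funext hF_eq
    rw [hFf]
    exact this
  have hD_cont : Continuous D := by
    have hre_c : Continuous fun β => (u β).re := Complex.continuous_re.comp hud.continuous
    have him_c : Continuous fun β => (u β).im := Complex.continuous_im.comp hud.continuous
    have hre'_c : Continuous fun β => (deriv u β).re := Complex.continuous_re.comp hu'
    have him'_c : Continuous fun β => (deriv u β).im := Complex.continuous_im.comp hu'
    have hw_c : Continuous w := Real.continuous_exp.comp (by continuity)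
    fun_prop
  have hF_cont : Continuous F := by
    have : Continuous fun β => ‖u β‖ := continuous_norm.comp hud.continuous
    have hw_c : Continuous w := Real.continuous_exp.comp (by continuity)
    fun_prop
  -- choose a minimum point on [α-1, α]
  obtain ⟨β₀, hβ₀mem, hβ₀min⟩ :=
    (isCompact_Icc (a := α - 1) (b := α)).exists_isMinOn
      (Set.nonempty_Icc.mpr (by linarith)) hF_cont.continuousOn
  have hβ₀le : β₀ ≤ α := hβ₀mem.2
  have hβ₀ge : α - 1 ≤ β₀ := hβ₀mem.1
  -- F β₀ ≤ N
  have hFβ₀ : F β₀ ≤ N := by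
    have h1 : (∫ _β in (α-1)..α, F β₀) = F β₀ := by
      simp
    have h2 : (∫ β in (α-1)..α, F β₀) ≤ ∫ β in (α-1)..α, F β := by
      apply intervalIntegral.integral_mono_on (by linarith)
        intervalIntegrable_const (hF_cont.intervalIntegrable _ _)
      intro x hx
      exact hβ₀min hx
    have h3 : (∫ β in (α-1)..α, F β) ≤ ∫ β in (α-1)..α, g β := by
      apply intervalIntegral.integral_mono_on (by linarith)
        (hF_cont.intervalIntegrable _ _) (hg_cont.intervalIntegrable _ _)
      intro x _
      simp only [hFdef, hgdef]
      apply mul_le_mul_of_nonneg_right _ (le_of_lt (hw_pos x))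
      nlinarith [sq_nonneg (‖deriv u x‖)]
    have h4 := hIle (α-1) α (by linarith)
    linarith
  -- pointwise bound |D β| ≤ (2 + |α|) * g β on [α-1, α]
  have hDbound : ∀ β ∈ Set.Icc (α - 1) α, |D β| ≤ (2 + |α|) * g β := by
    intro β hβ
    have hβabs : |β| ≤ 1 + |α| := by
      rw [abs_le]
      constructor
      · have := neg_abs_le α; linarith [hβ.1]
      · have := le_abs_self α; linarith [hβ.2]
    have hW : 0 ≤ w β := le_of_lt (hw_pos β)
    set r := (u β).re
    set i := (u β).im
    set r' := (deriv u β).re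
    set i' := (deriv u β).im
    have hg_eq : g β = ((r' ^ 2 + i' ^ 2) + (r ^ 2 + i ^ 2)) * w β := by
      simp only [hgdef, Complex.sq_norm, Complex.normSq_apply]
      ring_nf
      simp only [r, i, r', i']
      ring
    rw [hg_eq]
    simp only [hDdef]
    exact stmt5_auxD r i r' i' (w β) β |α| hW (abs_nonneg α) hβabs
  -- FTC
  have hFTC : (∫ β in β₀..α, D β) = F α - F β₀ := by
    apply intervalIntegral.integral_eq_sub_of_hasDerivAt
    · intro x _
      exact hF_deriv x
    · exact hD_cont.intervalIntegrable _ _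
  have hintabs : (∫ β in β₀..α, |D β|) ≤ ∫ β in (α-1)..α, |D β| := by
    apply intervalIntegral.integral_mono_interval hβ₀ge hβ₀le le_rfl
    · exact Filter.Eventually.of_forall fun x => abs_nonneg _
    · exact (hD_cont.abs.intervalIntegrable _ _)
  have hDint : (∫ β in (α-1)..α, |D β|) ≤ (2 + |α|) * N := by
    have h1 : (∫ β in (α-1)..α, |D β|) ≤ ∫ β in (α-1)..α, (2 + |α|) * g β := by
      apply intervalIntegral.integral_mono_on (by linarith)
        (hD_cont.abs.intervalIntegrable _ _)
        ((continuous_const.mul hg_cont).intervalIntegrable _ _)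
      exact hDbound
    have h2 : (∫ β in (α-1)..α, (2 + |α|) * g β) = (2 + |α|) * ∫ β in (α-1)..α, g β := by
      exact intervalIntegral.integral_const_mul _ _
    have h3 := hIle (α-1) α (by linarith)
    have h4 : (0:ℝ) ≤ 2 + |α| := by positivity
    nlinarith
  have hFα : F α ≤ (3 + |α|) * N := by
    have h1 : F α - F β₀ ≤ ∫ β in β₀..α, |D β| := by
      rw [← hFTC]
      calc (∫ β in β₀..α, D β) ≤ |∫ β in β₀..α, D β| := le_abs_self _
        _ ≤ ∫ β in β₀..α, |D β| := intervalIntegral.abs_integral_le_integral_abs hβ₀le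
    nlinarith
  -- conclude
  have hexp : (3 + |α|) * w α ≤ 4 := by
    have h1 : α ^ 2 / 2 + 1 ≤ Real.exp (α ^ 2 / 2) := Real.add_one_le_exp _
    have h2 : w α = (Real.exp (α ^ 2 / 2))⁻¹ := by
      simp only [hwdef]
      rw [← Real.exp_neg]
      ring_nf
    rw [h2]
    rw [inv_eq_one_div, mul_one_div, div_le_iff₀ (Real.exp_pos _)]
    nlinarith [abs_nonneg α, sq_abs α, Real.exp_pos (α ^ 2 / 2)]
  have hsq : (‖u α‖ * Real.exp (-α ^ 2 / 2)) ^ 2 ≤ 4 * N := by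
    have : (‖u α‖ * Real.exp (-α ^ 2 / 2)) ^ 2 = F α * w α := by
      simp only [hFdef, hwdef]
      ring
    rw [this]
    have hw_nonneg : 0 ≤ w α := le_of_lt (hw_pos α)
    calc F α * w α ≤ ((3 + |α|) * N) * w α := mul_le_mul_of_nonneg_right hFα hw_nonneg
      _ = ((3 + |α|) * w α) * N := by ring
      _ ≤ 4 * N := mul_le_mul_of_nonneg_right hexp hN_nonneg
  have hLHS_nonneg : 0 ≤ ‖u α‖ * Real.exp (-α ^ 2 / 2) := by positivity
  have hRHS : 2 * Real.sqrt N = Real.sqrt (4 * N) := by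
    rw [show (4:ℝ) * N = 2^2 * N by ring, Real.sqrt_mul (by positivity), Real.sqrt_sq (by norm_num)]
  calc ‖u α‖ * Real.exp (-α ^ 2 / 2)
      = Real.sqrt ((‖u α‖ * Real.exp (-α ^ 2 / 2)) ^ 2) := by
        rw [Real.sqrt_sq hLHS_nonneg]
    _ ≤ Real.sqrt (4 * N) := Real.sqrt_le_sqrt hsq
    _ = 2 * Real.sqrt N := hRHS.symm
end

section
/- (Weighted nonlinear estimate) For every positive integer p there exists a constant C > 0 such that the following holds: for every continuously differentiable u : ℝ → ℂ such that the function N(α) = e^{−pα²/2}·|u(α)|^p·u(α) is differentiable on ℝ and ∫_ℝ (|u'(α)|² + |u(α)|²)·e^{−α²/2} dα < ∞, one has (∫_ℝ (|N'(α)|² + |N(α)|²)·e^{−α²/2} dα)^{1/2} ≤ C·(∫_ℝ (|u'(α)|² + |u(α)|²)·e^{−α²/2} dα)^{(p+1)/2}. -/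
open MeasureTheory Filter Topology intervalIntegral


lemma gLip (n : ℕ) (z w : ℂ) :
    ‖(‖z‖ : ℂ) ^ n * z - (‖w‖ : ℂ) ^ n * w‖ ≤ (n + 1) * max ‖z‖ ‖w‖ ^ n * ‖z - w‖ := by
  induction n with
  | zero => simp
  | succ n ih =>
    have h1 : (‖z‖ : ℂ) ^ (n+1) * z - (‖w‖ : ℂ) ^ (n+1) * w
        = (‖z‖ : ℂ) * ((‖z‖ : ℂ) ^ n * z - (‖w‖ : ℂ) ^ n * w)
          + ((‖z‖ : ℂ) - (‖w‖ : ℂ)) * ((‖w‖ : ℂ) ^ n * w) := by ring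
    rw [h1]
    have h2 : ‖(‖z‖ : ℂ) * ((‖z‖ : ℂ) ^ n * z - (‖w‖ : ℂ) ^ n * w)
          + ((‖z‖ : ℂ) - (‖w‖ : ℂ)) * ((‖w‖ : ℂ) ^ n * w)‖
        ≤ ‖z‖ * ‖(‖z‖ : ℂ) ^ n * z - (‖w‖ : ℂ) ^ n * w‖ + |‖z‖ - ‖w‖| * (‖w‖^n * ‖w‖) := by
      refine (norm_add_le _ _).trans ?_
      gcongr <;> simp [norm_mul, abs_norm, Complex.norm_real, ← Complex.ofReal_sub]
    refine h2.trans ?_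
    have hzm : ‖z‖ ≤ max ‖z‖ ‖w‖ := le_max_left _ _
    have hwm : ‖w‖ ≤ max ‖z‖ ‖w‖ := le_max_right _ _
    have habs : |‖z‖ - ‖w‖| ≤ ‖z - w‖ := abs_norm_sub_norm_le z w
    have hm0 : (0:ℝ) ≤ max ‖z‖ ‖w‖ := le_trans (norm_nonneg z) hzm
    have h3 : ‖z‖ * ‖(‖z‖ : ℂ) ^ n * z - (‖w‖ : ℂ) ^ n * w‖
        ≤ max ‖z‖ ‖w‖ * ((n + 1) * max ‖z‖ ‖w‖ ^ n * ‖z - w‖) := by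
      gcongr
    have h4 : |‖z‖ - ‖w‖| * (‖w‖^n * ‖w‖) ≤ ‖z - w‖ * (max ‖z‖ ‖w‖ ^ n * max ‖z‖ ‖w‖) := by
      gcongr
    refine (add_le_add h3 h4).trans (le_of_eq ?_)
    push_cast
    ring
lemma fexp_hasDerivAt (p : ℕ) (α : ℝ) :
    HasDerivAt (fun x : ℝ => (Real.exp (-(p : ℝ) * x ^ 2 / 2) : ℂ))
      ((-(p : ℝ) * α * Real.exp (-(p : ℝ) * α ^ 2 / 2) : ℝ) : ℂ) α := by
  have h : HasDerivAt (fun x : ℝ => Real.exp (-(p : ℝ) * x ^ 2 / 2))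
      (-(p : ℝ) * α * Real.exp (-(p : ℝ) * α ^ 2 / 2)) α := by
    have h1 : HasDerivAt (fun x : ℝ => -(p : ℝ) * x ^ 2 / 2) (-(p : ℝ) * α) α := by
      have := ((hasDerivAt_pow 2 α).const_mul (-(p : ℝ))).div_const 2
      refine this.congr_deriv ?_
      push_cast; ring
    simpa [mul_comm] using h1.exp
  exact h.ofReal_comp

lemma deriv_bound (p : ℕ) (u : ℝ → ℂ) (hu : Differentiable ℝ u)
    (hN : Differentiable ℝ (fun α : ℝ =>
      (Real.exp (-(p : ℝ) * α ^ 2 / 2) : ℂ) * (‖u α‖ : ℂ) ^ p * u α)) (α : ℝ) :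
    ‖deriv (fun α : ℝ =>
        (Real.exp (-(p : ℝ) * α ^ 2 / 2) : ℂ) * (‖u α‖ : ℂ) ^ p * u α) α‖
      ≤ (p : ℝ) * |α| * Real.exp (-(p : ℝ) * α ^ 2 / 2) * ‖u α‖ ^ (p + 1)
        + ((p : ℝ) + 1) * Real.exp (-(p : ℝ) * α ^ 2 / 2) * ‖u α‖ ^ p * ‖deriv u α‖ := by
  set N : ℝ → ℂ := fun α : ℝ =>
      (Real.exp (-(p : ℝ) * α ^ 2 / 2) : ℂ) * (‖u α‖ : ℂ) ^ p * u α with hNdef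
  set f : ℝ → ℂ := fun x : ℝ => (Real.exp (-(p : ℝ) * x ^ 2 / 2) : ℂ) with hfdef
  have hNslope : Tendsto (fun x => ‖slope N α x‖) (𝓝[≠] α) (𝓝 ‖deriv N α‖) :=
    (continuous_norm.tendsto _).comp
      (hasDerivAt_iff_tendsto_slope.mp (hN α).hasDerivAt)
  have huslope : Tendsto (fun x => ‖slope u α x‖) (𝓝[≠] α) (𝓝 ‖deriv u α‖) :=
    (continuous_norm.tendsto _).comp
      (hasDerivAt_iff_tendsto_slope.mp (hu α).hasDerivAt)
  have hfslope : Tendsto (fun x => ‖slope f α x‖) (𝓝[≠] α)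
      (𝓝 ((p : ℝ) * |α| * Real.exp (-(p : ℝ) * α ^ 2 / 2))) := by
    have := (continuous_norm.tendsto _).comp
      (hasDerivAt_iff_tendsto_slope.mp (fexp_hasDerivAt p α))
    convert this using 2
    · rfl
    rw [Complex.norm_real, Real.norm_eq_abs, abs_mul, abs_mul, Real.abs_exp, abs_neg,
      Nat.abs_cast]
  have hucont : Tendsto (fun x => ‖u x‖) (𝓝[≠] α) (𝓝 ‖u α‖) :=
    ((continuous_norm.comp hu.continuous).tendsto α).mono_left nhdsWithin_le_nhds
  have hbound : ∀ᶠ x in 𝓝[≠] α, ‖slope N α x‖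
      ≤ ‖slope f α x‖ * ‖u x‖ ^ (p + 1)
        + Real.exp (-(p : ℝ) * α ^ 2 / 2) * (((p : ℝ) + 1) * max ‖u x‖ ‖u α‖ ^ p)
          * ‖slope u α x‖ := by
    filter_upwards [self_mem_nhdsWithin] with x hx
    have hsub : N x - N α = (f x - f α) * ((‖u x‖ : ℂ) ^ p * u x)
        + f α * ((‖u x‖ : ℂ) ^ p * u x - (‖u α‖ : ℂ) ^ p * u α) := by
      simp only [hNdef, hfdef]; ring
    have e1 : ‖slope N α x‖ = |x - α|⁻¹ * ‖N x - N α‖ := by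
      rw [slope_def_module, norm_smul, norm_inv, Real.norm_eq_abs]
    have e2 : ‖slope u α x‖ = |x - α|⁻¹ * ‖u x - u α‖ := by
      rw [slope_def_module, norm_smul, norm_inv, Real.norm_eq_abs]
    have e3 : ‖slope f α x‖ = |x - α|⁻¹ * ‖f x - f α‖ := by
      rw [slope_def_module, norm_smul, norm_inv, Real.norm_eq_abs]
    rw [e1, e2, e3, hsub]
    have hfα : ‖f α‖ = Real.exp (-(p : ℝ) * α ^ 2 / 2) := by
      simp only [hfdef, Complex.norm_real, Real.norm_eq_abs, Real.abs_exp]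
    calc |x - α|⁻¹ * ‖(f x - f α) * ((‖u x‖ : ℂ) ^ p * u x)
          + f α * ((‖u x‖ : ℂ) ^ p * u x - (‖u α‖ : ℂ) ^ p * u α)‖
        ≤ |x - α|⁻¹ * (‖f x - f α‖ * ‖u x‖ ^ (p + 1)
          + Real.exp (-(p : ℝ) * α ^ 2 / 2)
            * (((p : ℝ) + 1) * max ‖u x‖ ‖u α‖ ^ p * ‖u x - u α‖)) := by
          gcongr
          refine (norm_add_le _ _).trans ?_
          gcongr
          · rw [norm_mul, norm_mul, norm_pow, Complex.norm_real, norm_norm, pow_succ]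
          · rw [norm_mul, hfα]
            gcongr
            exact gLip p (u x) (u α)
      _ = ‖f x - f α‖ * |x - α|⁻¹ * ‖u x‖ ^ (p + 1)
          + Real.exp (-(p : ℝ) * α ^ 2 / 2) * (((p : ℝ) + 1) * max ‖u x‖ ‖u α‖ ^ p)
            * (|x - α|⁻¹ * ‖u x - u α‖) := by ring
      _ = _ := by ring
  have hrhs : Tendsto (fun x => ‖slope f α x‖ * ‖u x‖ ^ (p + 1)
      + Real.exp (-(p : ℝ) * α ^ 2 / 2) * (((p : ℝ) + 1) * max ‖u x‖ ‖u α‖ ^ p)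
        * ‖slope u α x‖) (𝓝[≠] α)
      (𝓝 ((p : ℝ) * |α| * Real.exp (-(p : ℝ) * α ^ 2 / 2) * ‖u α‖ ^ (p + 1)
        + Real.exp (-(p : ℝ) * α ^ 2 / 2) * (((p : ℝ) + 1) * max ‖u α‖ ‖u α‖ ^ p)
          * ‖deriv u α‖)) := by
    exact (hfslope.mul (hucont.pow (p + 1))).add
      ((tendsto_const_nhds.mul
        (tendsto_const_nhds.mul ((hucont.max tendsto_const_nhds).pow p))).mul huslope)
  have := le_of_tendsto_of_tendsto hNslope hrhs hbound
  rw [max_self] at this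
  linarith [this]
-- derivative of ‖u‖² for complex-valued u
lemma normSq_hasDerivAt (u : ℝ → ℂ) (u' : ℂ) (t : ℝ) (h : HasDerivAt u u' t) :
    HasDerivAt (fun s => ‖u s‖ ^ 2)
      (2 * ((u t).re * u'.re + (u t).im * u'.im)) t := by
  have hre : HasDerivAt (fun s => (u s).re) u'.re t :=
    (Complex.reCLM.hasFDerivAt.comp_hasDerivAt t h)
  have him : HasDerivAt (fun s => (u s).im) u'.im t :=
    (Complex.imCLM.hasFDerivAt.comp_hasDerivAt t h)
  have : HasDerivAt (fun s => (u s).re ^ 2 + (u s).im ^ 2)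
      (2 * (u t).re ^ 1 * u'.re + 2 * (u t).im ^ 1 * u'.im) t :=
    ((hre.pow 2).add (him.pow 2))
  have heq : (fun s => (u s).re ^ 2 + (u s).im ^ 2) = fun s => ‖u s‖ ^ 2 := by
    funext s
    rw [Complex.sq_norm, Complex.normSq_apply]; ring
  rw [heq] at this
  convert this using 1
  push_cast; ring

lemma sup_bound (u : ℝ → ℂ) (hu : ContDiff ℝ 1 u)
    (hi : Integrable (fun α : ℝ => (‖deriv u α‖ ^ 2 + ‖u α‖ ^ 2) * Real.exp (-α ^ 2 / 2)))
    (x : ℝ) :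
    ‖u x‖ ^ 2 * Real.exp (-x ^ 2 / 2)
      ≤ 2 * Real.exp 1 * ∫ α : ℝ, (‖deriv u α‖ ^ 2 + ‖u α‖ ^ 2) * Real.exp (-α ^ 2 / 2) := by
  set I := ∫ α : ℝ, (‖deriv u α‖ ^ 2 + ‖u α‖ ^ 2) * Real.exp (-α ^ 2 / 2) with hI
  have hInn : 0 ≤ I := integral_nonneg fun α => by positivity
  have hud : Differentiable ℝ u := hu.differentiable one_ne_zero
  have hcd : Continuous (deriv u) := hu.continuous_deriv le_rfl
  set a : ℝ := if 0 ≤ x then x - 1 else x with ha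
  set b : ℝ := a + 1 with hb
  have hax : a ≤ x := by rw [ha]; split <;> simp
  have hxb : x ≤ b := by rw [hb, ha]; split <;> [linarith; linarith]
  have hab : a ≤ b := hax.trans hxb
  have ht2 : ∀ t ∈ Set.Icc a b, t ^ 2 ≤ x ^ 2 + 1 := by
    intro t ht
    obtain ⟨h1, h2⟩ := ht
    rw [hb] at h2
    rw [ha] at h1 h2
    by_cases hx : 0 ≤ x
    · rw [if_pos hx] at h1 h2; nlinarith
    · rw [if_neg hx] at h1 h2; push_neg at hx; nlinarith
  set d : ℝ → ℝ :=
    fun t => 2 * ((u t).re * (deriv u t).re + (u t).im * (deriv u t).im) with hd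
  have hdcont : Continuous d := by
    apply Continuous.mul continuous_const
    exact ((Complex.continuous_re.comp hud.continuous).mul
        (Complex.continuous_re.comp hcd)).add
      ((Complex.continuous_im.comp hud.continuous).mul (Complex.continuous_im.comp hcd))
  have hdb : ∀ t, |d t| ≤ ‖deriv u t‖ ^ 2 + ‖u t‖ ^ 2 := by
    intro t
    have h1 : ‖u t‖ ^ 2 = (u t).re ^ 2 + (u t).im ^ 2 := by
      rw [Complex.sq_norm, Complex.normSq_apply]; ring
    have h2 : ‖deriv u t‖ ^ 2 = (deriv u t).re ^ 2 + (deriv u t).im ^ 2 := by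
      rw [Complex.sq_norm, Complex.normSq_apply]; ring
    have hdt : d t = 2 * ((u t).re * (deriv u t).re + (u t).im * (deriv u t).im) := rfl
    rw [h1, h2, hdt, abs_le]
    constructor <;>
      nlinarith [sq_nonneg ((u t).re - (deriv u t).re), sq_nonneg ((u t).re + (deriv u t).re),
        sq_nonneg ((u t).im - (deriv u t).im), sq_nonneg ((u t).im + (deriv u t).im)]
  have hqcont : Continuous fun s => ‖u s‖ ^ 2 := (hud.continuous.norm).pow 2
  -- FTC
  set C : ℝ := ∫ s in a..b, |d s| with hC
  have key : ∀ t ∈ Set.Icc a b, ‖u x‖ ^ 2 ≤ ‖u t‖ ^ 2 + C := by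
    intro t ht
    have hftc : ∫ s in t..x, d s = ‖u x‖ ^ 2 - ‖u t‖ ^ 2 :=
      intervalIntegral.integral_eq_sub_of_hasDerivAt
        (fun s _ => normSq_hasDerivAt u _ s (hud s).hasDerivAt)
        (hdcont.intervalIntegrable t x)
    have habs : |∫ s in t..x, d s| ≤ C := by
      rw [← Real.norm_eq_abs]
      refine le_trans intervalIntegral.norm_integral_le_integral_norm_uIoc ?_
      simp only [Real.norm_eq_abs]
      rw [hC, intervalIntegral.integral_of_le hab]
      have hsub : Set.uIoc t x ⊆ Set.Ioc a b := by
        refine Set.Ioc_subset_Ioc (le_min ht.1 hax) (max_le ht.2 hxb)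
      exact setIntegral_mono_set hdcont.abs.integrableOn_Ioc
        (Filter.Eventually.of_forall fun s => abs_nonneg _) hsub.eventuallyLE
    have := (abs_le.mp habs).2
    rw [hftc] at this
    linarith
  have hux : ‖u x‖ ^ 2 ≤ (∫ t in a..b, ‖u t‖ ^ 2) + C := by
    have h0 : ‖u x‖ ^ 2 = ∫ t in a..b, ‖u x‖ ^ 2 := by
      rw [intervalIntegral.integral_const, hb]
      simp
    rw [h0]
    have := intervalIntegral.integral_mono_on (μ := volume)
      (f := fun _ => ‖u x‖ ^ 2) (g := fun t => ‖u t‖ ^ 2 + C) hab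
      (continuous_const.intervalIntegrable a b)
      ((hqcont.add continuous_const).intervalIntegrable a b) key
    refine this.trans (le_of_eq ?_)
    rw [intervalIntegral.integral_add (hqcont.intervalIntegrable a b)
      (continuous_const.intervalIntegrable a b), intervalIntegral.integral_const, hb]
    simp
  -- weighted comparison on [a,b]
  set E := Real.exp ((x ^ 2 + 1) / 2) with hE
  have hweight : ∀ (h : ℝ → ℝ), Continuous h → (∀ t, 0 ≤ h t) →
      (∀ t, h t ≤ ‖deriv u t‖ ^ 2 + ‖u t‖ ^ 2) →
      ∫ t in a..b, h t ≤ E * I := by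
    intro h hc hnn hle
    have step1 : ∫ t in a..b, h t
        ≤ ∫ t in a..b, E * ((‖deriv u t‖ ^ 2 + ‖u t‖ ^ 2) * Real.exp (-t ^ 2 / 2)) := by
      refine intervalIntegral.integral_mono_on hab (hc.intervalIntegrable a b)
        ((continuous_const.mul (((hcd.norm.pow 2).add (hud.continuous.norm.pow 2)).mul
          (Real.continuous_exp.comp (by continuity)))).intervalIntegrable a b) ?_
      intro t ht
      have h1 : (1 : ℝ) ≤ E * Real.exp (-t ^ 2 / 2) := by
        rw [hE, ← Real.exp_add]
        have : (0:ℝ) ≤ (x ^ 2 + 1) / 2 + -t ^ 2 / 2 := by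
          have := ht2 t ht; linarith
        calc (1:ℝ) = Real.exp 0 := (Real.exp_zero).symm
          _ ≤ _ := Real.exp_le_exp.mpr this
      calc h t = h t * 1 := (mul_one _).symm
        _ ≤ (‖deriv u t‖ ^ 2 + ‖u t‖ ^ 2) * (E * Real.exp (-t ^ 2 / 2)) := by
            apply mul_le_mul (hle t) h1 zero_le_one (by positivity)
        _ = E * ((‖deriv u t‖ ^ 2 + ‖u t‖ ^ 2) * Real.exp (-t ^ 2 / 2)) := by ring
    refine step1.trans ?_
    rw [intervalIntegral.integral_const_mul]
    apply mul_le_mul_of_nonneg_left _ (Real.exp_nonneg _)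
    rw [intervalIntegral.integral_of_le hab]
    exact setIntegral_le_integral hi
      (Filter.Eventually.of_forall fun t => by positivity)
  have h1 : ∫ t in a..b, ‖u t‖ ^ 2 ≤ E * I := by
    refine hweight _ hqcont (fun t => by positivity) fun t => ?_
    show ‖u t‖ ^ 2 ≤ _
    nlinarith [sq_nonneg ‖deriv u t‖]
  have h2 : ∫ t in a..b, |d t| ≤ E * I := by
    refine hweight _ hdcont.abs (fun t => abs_nonneg _) fun t => ?_
    exact hdb t
  have hfinal : ‖u x‖ ^ 2 ≤ 2 * E * I := by
    rw [hC] at hux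
    calc ‖u x‖ ^ 2 ≤ (∫ t in a..b, ‖u t‖ ^ 2) + ∫ s in a..b, |d s| := hux
      _ ≤ E * I + E * I := add_le_add h1 h2
      _ = 2 * E * I := by ring
  have hEe : E * Real.exp (-x ^ 2 / 2) ≤ Real.exp 1 := by
    rw [hE, ← Real.exp_add]
    apply Real.exp_le_exp.mpr
    linarith
  calc ‖u x‖ ^ 2 * Real.exp (-x ^ 2 / 2) ≤ 2 * E * I * Real.exp (-x ^ 2 / 2) := by
        apply mul_le_mul_of_nonneg_right hfinal (Real.exp_nonneg _)
    _ = 2 * (E * Real.exp (-x ^ 2 / 2)) * I := by ring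
    _ ≤ 2 * Real.exp 1 * I := by
        apply mul_le_mul_of_nonneg_right _ hInn
        nlinarith [Real.exp_nonneg (-x^2/2), hEe]

lemma sq_exp_le_one (α : ℝ) : α ^ 2 * Real.exp (-α ^ 2 / 2) ≤ 1 := by
  have h1 : α ^ 2 / 2 - 1 + 1 ≤ Real.exp (α ^ 2 / 2 - 1) := Real.add_one_le_exp _
  have h2 : Real.exp (α ^ 2 / 2 - 1) = Real.exp (α ^ 2 / 2) / Real.exp 1 := Real.exp_sub _ _
  have he : (2 : ℝ) ≤ Real.exp 1 := by
    have := Real.exp_one_gt_d9; linarith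
  have hep : (0:ℝ) < Real.exp (α ^ 2 / 2) := Real.exp_pos _
  have h3 : α ^ 2 ≤ Real.exp (α ^ 2 / 2) := by
    rw [h2] at h1
    have h4 : (α ^ 2 / 2) * Real.exp 1 ≤ Real.exp (α ^ 2 / 2) := by
      rw [← le_div_iff₀ (Real.exp_pos 1)]
      linarith
    nlinarith [sq_nonneg α]
  have : Real.exp (-α ^ 2 / 2) = (Real.exp (α ^ 2 / 2))⁻¹ := by
    rw [← Real.exp_neg]; ring_nf
  rw [this]
  rw [mul_inv_le_iff₀ hep]
  linarith

lemma two_sq_aux (x y n : ℝ) (h0 : 0 ≤ n) (h : n ≤ x + y) :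
    n ^ 2 ≤ 2 * x ^ 2 + 2 * y ^ 2 := by
  nlinarith [sq_nonneg (x - y), sq_nonneg (x + y)]

lemma combine_aux (q a b n2 s x2 x3 : ℝ) (hq : 0 ≤ q) (ha : 0 ≤ a) (hb : 0 ≤ b)
    (h1 : n2 ≤ 2 * x2 + 2 * x3) (h2 : x2 ≤ q ^ 2 * a) (h3 : x3 ≤ (q + 1) ^ 2 * b)
    (h4 : s ≤ a) :
    n2 + s ≤ (2 * q ^ 2 + 2 * (q + 1) ^ 2 + 1) * a + (2 * q ^ 2 + 2 * (q + 1) ^ 2 + 1) * b := by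
  nlinarith [mul_nonneg (sq_nonneg (q + 1)) ha, mul_nonneg (sq_nonneg q) hb,
    mul_nonneg (sq_nonneg q) ha, mul_nonneg (sq_nonneg (q + 1)) hb]

lemma pointwise_bound (p : ℕ) (hp : 0 < p) (M : ℝ) (α : ℝ)
    (A B : ℝ) (hA : 0 ≤ A) (hB : 0 ≤ B)
    (hAM : A ^ 2 * Real.exp (-α ^ 2 / 2) ≤ M)
    (n' : ℝ) (hn'0 : 0 ≤ n')
    (hn' : n' ≤ (p : ℝ) * |α| * Real.exp (-(p : ℝ) * α ^ 2 / 2) * A ^ (p + 1)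
      + ((p : ℝ) + 1) * Real.exp (-(p : ℝ) * α ^ 2 / 2) * A ^ p * B) :
    (n' ^ 2 + (Real.exp (-(p : ℝ) * α ^ 2 / 2) * A ^ (p + 1)) ^ 2) * Real.exp (-α ^ 2 / 2)
      ≤ (2 * (p : ℝ) ^ 2 + 2 * ((p : ℝ) + 1) ^ 2 + 1) * M ^ p
        * ((B ^ 2 + A ^ 2) * Real.exp (-α ^ 2 / 2)) := by
  set w := Real.exp (-α ^ 2 / 2) with hwdef
  set e := Real.exp (-(p : ℝ) * α ^ 2 / 2) with hedef
  have hw : 0 < w := Real.exp_pos _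
  have hwe : e = w ^ p := by
    rw [hedef, hwdef, ← Real.exp_nat_mul]
    congr 1; ring
  have hw1 : w ≤ 1 := Real.exp_le_one_iff.mpr (by nlinarith [sq_nonneg α])
  have hM0 : 0 ≤ M := le_trans (by positivity) hAM
  have hb1 : (A ^ 2 * w) ^ p ≤ M ^ p := pow_le_pow_left₀ (by positivity) hAM p
  have hb2 : w ^ p ≤ 1 := pow_le_one₀ hw.le hw1
  have hb3 : w ^ p ≤ w := by
    calc w ^ p ≤ w ^ 1 := pow_le_pow_of_le_one hw.le hw1 hp
      _ = w := pow_one w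
  have hα : α ^ 2 * w ≤ 1 := sq_exp_le_one α
  have hα2 : α ^ 2 * w ^ p ≤ 1 := by nlinarith [sq_nonneg α]
  -- three structural bounds
  have S1 : (e * A ^ (p + 1)) ^ 2 * w ≤ M ^ p * (A ^ 2 * w) := by
    have heq : (e * A ^ (p + 1)) ^ 2 * w = (A ^ 2 * w) ^ p * (w ^ p * (A ^ 2 * w)) := by
      rw [hwe]; ring
    rw [heq]
    calc (A ^ 2 * w) ^ p * (w ^ p * (A ^ 2 * w))
        ≤ M ^ p * (1 * (A ^ 2 * w)) := by gcongr <;> positivity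
      _ = M ^ p * (A ^ 2 * w) := by ring
  have S2 : ((p : ℝ) * |α| * e * A ^ (p + 1)) ^ 2 * w
      ≤ (p : ℝ) ^ 2 * (M ^ p * (A ^ 2 * w)) := by
    have heq : ((p : ℝ) * |α| * e * A ^ (p + 1)) ^ 2 * w
        = (p : ℝ) ^ 2 * ((A ^ 2 * w) ^ p * ((α ^ 2 * w ^ p) * (A ^ 2 * w))) := by
      rw [hwe, ← sq_abs α]; ring
    rw [heq]
    have : (A ^ 2 * w) ^ p * ((α ^ 2 * w ^ p) * (A ^ 2 * w)) ≤ M ^ p * (1 * (A ^ 2 * w)) := by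
      gcongr <;> positivity
    nlinarith [pow_nonneg (by positivity : (0:ℝ) ≤ A ^ 2 * w) p, sq_nonneg (p:ℝ)]
  have S3 : (((p : ℝ) + 1) * e * A ^ p * B) ^ 2 * w
      ≤ ((p : ℝ) + 1) ^ 2 * (M ^ p * (B ^ 2 * w)) := by
    have heq : (((p : ℝ) + 1) * e * A ^ p * B) ^ 2 * w
        = ((p : ℝ) + 1) ^ 2 * ((A ^ 2 * w) ^ p * (w ^ p * (B ^ 2 * w))) := by
      rw [hwe]; ring
    rw [heq]
    have : (A ^ 2 * w) ^ p * (w ^ p * (B ^ 2 * w)) ≤ M ^ p * (1 * (B ^ 2 * w)) := by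
      gcongr <;> positivity
    nlinarith [sq_nonneg ((p:ℝ)+1)]
  -- combine
  have hMp : 0 ≤ M ^ p := pow_nonneg hM0 p
  have hsq : n' ^ 2 ≤ 2 * ((p : ℝ) * |α| * e * A ^ (p + 1)) ^ 2
      + 2 * (((p : ℝ) + 1) * e * A ^ p * B) ^ 2 :=
    two_sq_aux _ _ _ hn'0 hn'
  have hsqw := mul_le_mul_of_nonneg_right hsq hw.le
  have hgoal : n' ^ 2 * w + (e * A ^ (p + 1)) ^ 2 * w
      ≤ (2 * (p : ℝ) ^ 2 + 2 * ((p : ℝ) + 1) ^ 2 + 1) * (M ^ p * (A ^ 2 * w))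
        + (2 * (p : ℝ) ^ 2 + 2 * ((p : ℝ) + 1) ^ 2 + 1) * (M ^ p * (B ^ 2 * w)) := by
    refine combine_aux (p : ℝ) (M ^ p * (A ^ 2 * w)) (M ^ p * (B ^ 2 * w)) _ _ _ _
      (by positivity) (by positivity) (by positivity) ?_ S2 S3 S1
    calc n' ^ 2 * w ≤ (2 * ((p : ℝ) * |α| * e * A ^ (p + 1)) ^ 2
          + 2 * (((p : ℝ) + 1) * e * A ^ p * B) ^ 2) * w := hsqw
      _ = 2 * (((p : ℝ) * |α| * e * A ^ (p + 1)) ^ 2 * w)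
          + 2 * ((((p : ℝ) + 1) * e * A ^ p * B) ^ 2 * w) := by ring
  calc (n' ^ 2 + (e * A ^ (p + 1)) ^ 2) * w
      = n' ^ 2 * w + (e * A ^ (p + 1)) ^ 2 * w := by ring
    _ ≤ (2 * (p : ℝ) ^ 2 + 2 * ((p : ℝ) + 1) ^ 2 + 1) * (M ^ p * (A ^ 2 * w))
        + (2 * (p : ℝ) ^ 2 + 2 * ((p : ℝ) + 1) ^ 2 + 1) * (M ^ p * (B ^ 2 * w)) := hgoal
    _ = (2 * (p : ℝ) ^ 2 + 2 * ((p : ℝ) + 1) ^ 2 + 1) * M ^ p * ((B ^ 2 + A ^ 2) * w) := by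
        ring
lemma sqrt_pow_aux (x : ℝ) (n : ℕ) (h : 0 ≤ x) : Real.sqrt (x ^ n) = Real.sqrt x ^ n := by
  induction n with
  | zero => simp
  | succ n ih => rw [pow_succ, pow_succ, Real.sqrt_mul (by positivity), ih]

/-- Weighted nonlinear estimate: `‖e^{-pα²/2}|u|^p u‖_{𝓗¹_α} ≤ C ‖u‖_{𝓗¹_α}^{p+1}`. -/
theorem stmt6 (p : ℕ) (hp : 0 < p) :
    ∃ C : ℝ, 0 < C ∧ ∀ u : ℝ → ℂ, ContDiff ℝ 1 u →
      Differentiable ℝ (fun α : ℝ =>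
        (Real.exp (-(p : ℝ) * α ^ 2 / 2) : ℂ) * (‖u α‖ : ℂ) ^ p * u α) →
      Integrable (fun α : ℝ =>
        (‖deriv u α‖ ^ 2 + ‖u α‖ ^ 2) * Real.exp (-α ^ 2 / 2)) →
      Real.sqrt (∫ α : ℝ,
          (‖deriv (fun α : ℝ =>
              (Real.exp (-(p : ℝ) * α ^ 2 / 2) : ℂ) * (‖u α‖ : ℂ) ^ p * u α) α‖ ^ 2
            + ‖(Real.exp (-(p : ℝ) * α ^ 2 / 2) : ℂ)
                * (‖u α‖ : ℂ) ^ p * u α‖ ^ 2) * Real.exp (-α ^ 2 / 2))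
        ≤ C * Real.sqrt (∫ α : ℝ,
            (‖deriv u α‖ ^ 2 + ‖u α‖ ^ 2)
              * Real.exp (-α ^ 2 / 2)) ^ (p + 1) := by
  set K : ℝ := 2 * (p : ℝ) ^ 2 + 2 * ((p : ℝ) + 1) ^ 2 + 1 with hK
  have hK0 : 0 < K := by positivity
  refine ⟨Real.sqrt (K * (2 * Real.exp 1) ^ p) + 1, by positivity, ?_⟩
  intro u hu hN hInt
  set I := ∫ α : ℝ, (‖deriv u α‖ ^ 2 + ‖u α‖ ^ 2) * Real.exp (-α ^ 2 / 2) with hI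
  have hInn : 0 ≤ I := integral_nonneg fun α => by positivity
  have hud : Differentiable ℝ u := hu.differentiable one_ne_zero
  set M := 2 * Real.exp 1 * I with hM
  have hMsup : ∀ x, ‖u x‖ ^ 2 * Real.exp (-x ^ 2 / 2) ≤ M := sup_bound u hu hInt
  set N : ℝ → ℂ := fun α : ℝ =>
    (Real.exp (-(p : ℝ) * α ^ 2 / 2) : ℂ) * (‖u α‖ : ℂ) ^ p * u α with hNdef
  have hptw : ∀ α, (‖deriv N α‖ ^ 2 + ‖N α‖ ^ 2) * Real.exp (-α ^ 2 / 2)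
      ≤ K * M ^ p * ((‖deriv u α‖ ^ 2 + ‖u α‖ ^ 2) * Real.exp (-α ^ 2 / 2)) := by
    intro α
    have hNα : ‖N α‖ = Real.exp (-(p : ℝ) * α ^ 2 / 2) * ‖u α‖ ^ (p + 1) := by
      have : N α = (Real.exp (-(p : ℝ) * α ^ 2 / 2) : ℂ) * (‖u α‖ : ℂ) ^ p * u α := rfl
      rw [this, norm_mul, norm_mul, norm_pow, Complex.norm_real, Complex.norm_real,
        Real.norm_eq_abs, Real.abs_exp, Real.norm_eq_abs, abs_norm, pow_succ]
      ring
    have hd := deriv_bound p u hud hN α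
    have := pointwise_bound p hp M α ‖u α‖ ‖deriv u α‖ (norm_nonneg _) (norm_nonneg _)
      (hMsup α) ‖deriv N α‖ (norm_nonneg _) hd
    rw [← hNα] at this
    exact this
  have hmono : ∫ α : ℝ, (‖deriv N α‖ ^ 2 + ‖N α‖ ^ 2) * Real.exp (-α ^ 2 / 2)
      ≤ K * M ^ p * I := by
    have := integral_mono_of_nonneg
      (f := fun α => (‖deriv N α‖ ^ 2 + ‖N α‖ ^ 2) * Real.exp (-α ^ 2 / 2))
      (g := fun α => K * M ^ p * ((‖deriv u α‖ ^ 2 + ‖u α‖ ^ 2) * Real.exp (-α ^ 2 / 2)))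
      (Filter.Eventually.of_forall fun α => by positivity)
      (hInt.const_mul _) (Filter.Eventually.of_forall hptw)
    rwa [MeasureTheory.integral_const_mul] at this
  refine le_trans (Real.sqrt_le_sqrt hmono) ?_
  have hMeq : K * M ^ p * I = (K * (2 * Real.exp 1) ^ p) * I ^ (p + 1) := by
    rw [hM, mul_pow]; ring
  rw [hMeq, Real.sqrt_mul (by positivity), sqrt_pow_aux I (p + 1) hInn]
  have h1 : Real.sqrt (K * (2 * Real.exp 1) ^ p)
      ≤ Real.sqrt (K * (2 * Real.exp 1) ^ p) + 1 := by linarith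
  exact mul_le_mul_of_nonneg_right h1 (by positivity)
end

section
/- (Conservation of energy, divergence-form model) Let d ≥ 1 and p > 0, and let u be a uniformly compactly supported smooth solution of the defocusing divergence-form OU-NLS with exponent p. Then the energy E(t) = ∫_{ℝ^d×ℝ} [ (1/2)·∑_{j=1}^d |∂_{x_j}u(t,x,α)|² + (1/2)·|∂_α u(t,x,α)|²·e^{−α²/2} + (1/(p+2))·|u(t,x,α)|^{p+2} ] dx dα satisfies E(t) = E(0) for all t ∈ ℝ. -/
open MeasureTheory

noncomputable section

/-- Partial derivative in the time variable. -/
def pdT {d : ℕ} (u : ℝ → (Fin d → ℝ) → ℝ → ℂ) : ℝ → (Fin d → ℝ) → ℝ → ℂ :=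
  fun t x α => deriv (fun s => u s x α) t

/-- Partial derivative in the `j`-th Euclidean variable. -/
def pdX {d : ℕ} (j : Fin d) (u : ℝ → (Fin d → ℝ) → ℝ → ℂ) : ℝ → (Fin d → ℝ) → ℝ → ℂ :=
  fun t x α => deriv (fun s => u t (Function.update x j s) α) (x j)

/-- Partial derivative in the Ornstein–Uhlenbeck variable `α`. -/
def pdA {d : ℕ} (u : ℝ → (Fin d → ℝ) → ℝ → ℂ) : ℝ → (Fin d → ℝ) → ℝ → ℂ :=
  fun t x α => deriv (fun s => u t x s) α

/-- Laplacian in the Euclidean variables: `Δ_x u = ∑_j ∂²u/∂x_j²`. -/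
def lapX {d : ℕ} (u : ℝ → (Fin d → ℝ) → ℝ → ℂ) : ℝ → (Fin d → ℝ) → ℝ → ℂ :=
  fun t x α => ∑ j : Fin d, pdX j (pdX j u) t x α

/-- The divergence-form Ornstein–Uhlenbeck operator: `∂_α (e^{-α²/2} ∂_α u)`. -/
def ouDiv {d : ℕ} (u : ℝ → (Fin d → ℝ) → ℝ → ℂ) : ℝ → (Fin d → ℝ) → ℝ → ℂ :=
  pdA (fun t x α => (Real.exp (-α ^ 2 / 2) : ℂ) * pdA u t x α)

/-- A uniformly compactly supported smooth solution of the defocusing divergence-form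
OU-NLS with exponent `p`:
`i ∂_t u + Δ_x u + ∂_α(e^{-α²/2} ∂_α u) = |u|^p u`. -/
def IsUCSSolutionDiv (d : ℕ) (p : ℝ) (u : ℝ → (Fin d → ℝ) → ℝ → ℂ) : Prop :=
  ContDiff ℝ (⊤ : ℕ∞) (fun q : ℝ × (Fin d → ℝ) × ℝ => u q.1 q.2.1 q.2.2) ∧
  (∃ K : Set ((Fin d → ℝ) × ℝ), IsCompact K ∧
    ∀ (t : ℝ) (x : Fin d → ℝ) (α : ℝ), (x, α) ∉ K → u t x α = 0) ∧
  ∀ (t : ℝ) (x : Fin d → ℝ) (α : ℝ),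
    Complex.I * pdT u t x α + lapX u t x α + ouDiv u t x α
      = ((‖u t x α‖ ^ p : ℝ) : ℂ) * u t x α

end


noncomputable section
namespace Stmt8Aux
open MeasureTheory Function Set

/-! ### Generic helpers -/

lemma integral_deriv_zero (g : ℝ → ℝ) (h1 : ContDiff ℝ 1 g) (h2 : HasCompactSupport g) :
    ∫ s, deriv g s = 0 := by
  have hi : Integrable (deriv g) :=
    (h1.continuous_deriv le_rfl).integrable_of_hasCompactSupport h2.deriv
  have h := integral_add_compl measurableSet_Iic hi (s := Set.Iic (0:ℝ))
  rw [Set.compl_Iic] at h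
  rw [← h, h2.integral_Iic_deriv_eq h1 0, h2.integral_Ioi_deriv_eq h1 0]
  ring

lemma hasDerivAt_update {d : ℕ} (c : Fin d → ℝ) (j : Fin d) (s₀ : ℝ) :
    HasDerivAt (fun s => Function.update c j s) (Pi.single j 1) s₀ := by
  rw [hasDerivAt_pi]; intro i
  by_cases h : i = j
  · subst h
    simp only [Function.update_self, Pi.single_eq_same]
    exact hasDerivAt_id _
  · simp only [Function.update_apply, if_neg h, Pi.single_eq_of_ne h]
    exact hasDerivAt_const _ _

lemma continuous_update_s {d : ℕ} (c : Fin d → ℝ) (j : Fin d) :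
    Continuous (fun s : ℝ => Function.update c j s) :=
  continuous_iff_continuousAt.2 fun s₀ => (hasDerivAt_update c j s₀).continuousAt

lemma h1top : (1 : WithTop ℕ∞) ≤ ((⊤ : ℕ∞) : WithTop ℕ∞) := by
  exact_mod_cast (le_top : (1:ℕ∞) ≤ ⊤)
lemma h2top : (2 : WithTop ℕ∞) ≤ ((⊤ : ℕ∞) : WithTop ℕ∞) := by
  have : ((2:ℕ∞) : WithTop ℕ∞) ≤ ((⊤ : ℕ∞) : WithTop ℕ∞) := by
    exact_mod_cast (le_top : (2:ℕ∞) ≤ ⊤)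
  simpa using this
lemma hstop : ((⊤ : ℕ∞) : WithTop ℕ∞) + 1 ≤ ((⊤ : ℕ∞) : WithTop ℕ∞) := by
  exact_mod_cast (le_top : (⊤:ℕ∞) + 1 ≤ ⊤)

/-! ### Representation of the partial derivatives via `fderiv` -/

variable {d : ℕ}

def Unc (v : ℝ → (Fin d → ℝ) → ℝ → ℂ) : ℝ × (Fin d → ℝ) × ℝ → ℂ :=
  fun q => v q.1 q.2.1 q.2.2

def eT : ℝ × (Fin d → ℝ) × ℝ := (1, 0, 0)
def eX (j : Fin d) : ℝ × (Fin d → ℝ) × ℝ := (0, Pi.single j 1, 0)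
def eA : ℝ × (Fin d → ℝ) × ℝ := (0, 0, 1)

section V
variable {v : ℝ → (Fin d → ℝ) → ℝ → ℂ} (hv : ContDiff ℝ (⊤ : ℕ∞) (Unc v))
include hv

lemma hdiff : Differentiable ℝ (Unc v) := hv.differentiable (by simp)

lemma hasDerivAt_T (t : ℝ) (x : Fin d → ℝ) (α : ℝ) :
    HasDerivAt (fun s => v s x α) (fderiv ℝ (Unc v) (t, x, α) eT) t := by
  have h1 : HasDerivAt (fun s : ℝ => ((s, x, α) : ℝ × (Fin d → ℝ) × ℝ)) eT t :=
    (hasDerivAt_id t).prodMk ((hasDerivAt_const t x).prodMk (hasDerivAt_const t α))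
  exact ((hdiff hv (t, x, α)).hasFDerivAt.comp_hasDerivAt t h1 : _)

lemma hasDerivAt_X (j : Fin d) (t : ℝ) (x : Fin d → ℝ) (α : ℝ) :
    HasDerivAt (fun s => v t (Function.update x j s) α)
      (fderiv ℝ (Unc v) (t, x, α) (eX j)) (x j) := by
  have h1 : HasDerivAt (fun s : ℝ => ((t, Function.update x j s, α) : ℝ × (Fin d → ℝ) × ℝ))
      (eX j) (x j) :=
    (hasDerivAt_const _ t).prodMk ((hasDerivAt_update x j (x j)).prodMk (hasDerivAt_const _ α))
  have h2 : HasFDerivAt (Unc v) (fderiv ℝ (Unc v) (t, x, α))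
      ((t, Function.update x j (x j), α) : ℝ × (Fin d → ℝ) × ℝ) := by
    rw [Function.update_eq_self]
    exact (hdiff hv (t, x, α)).hasFDerivAt
  exact (h2.comp_hasDerivAt (x j) h1 : _)

lemma hasDerivAt_A (t : ℝ) (x : Fin d → ℝ) (α : ℝ) :
    HasDerivAt (fun s => v t x s) (fderiv ℝ (Unc v) (t, x, α) eA) α := by
  have h1 : HasDerivAt (fun s : ℝ => ((t, x, s) : ℝ × (Fin d → ℝ) × ℝ)) eA α :=
    (hasDerivAt_const _ t).prodMk ((hasDerivAt_const _ x).prodMk (hasDerivAt_id α))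
  exact ((hdiff hv (t, x, α)).hasFDerivAt.comp_hasDerivAt α h1 : _)

lemma pdT_eq (t : ℝ) (x : Fin d → ℝ) (α : ℝ) :
    pdT v t x α = fderiv ℝ (Unc v) (t, x, α) eT := (hasDerivAt_T hv t x α).deriv

lemma pdX_eq (j : Fin d) (t : ℝ) (x : Fin d → ℝ) (α : ℝ) :
    pdX j v t x α = fderiv ℝ (Unc v) (t, x, α) (eX j) := (hasDerivAt_X hv j t x α).deriv

lemma pdA_eq (t : ℝ) (x : Fin d → ℝ) (α : ℝ) :
    pdA v t x α = fderiv ℝ (Unc v) (t, x, α) eA := (hasDerivAt_A hv t x α).deriv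

lemma smooth_D (w : ℝ × (Fin d → ℝ) × ℝ) :
    ContDiff ℝ (⊤ : ℕ∞) (fun q => fderiv ℝ (Unc v) q w) :=
  (ContinuousLinearMap.apply ℝ ℂ w).contDiff.comp
    (hv.fderiv_right (m := ((⊤:ℕ∞) : WithTop ℕ∞)) hstop)

lemma unc_pdT : Unc (pdT v) = fun q => fderiv ℝ (Unc v) q eT := by
  funext q; exact pdT_eq hv q.1 q.2.1 q.2.2

lemma unc_pdX (j : Fin d) : Unc (pdX j v) = fun q => fderiv ℝ (Unc v) q (eX j) := by
  funext q; exact pdX_eq hv j q.1 q.2.1 q.2.2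

lemma unc_pdA : Unc (pdA v) = fun q => fderiv ℝ (Unc v) q eA := by
  funext q; exact pdA_eq hv q.1 q.2.1 q.2.2

lemma smooth_pdT : ContDiff ℝ (⊤ : ℕ∞) (Unc (pdT v)) := by
  rw [unc_pdT hv]; exact smooth_D hv eT
lemma smooth_pdX (j : Fin d) : ContDiff ℝ (⊤ : ℕ∞) (Unc (pdX j v)) := by
  rw [unc_pdX hv j]; exact smooth_D hv (eX j)
lemma smooth_pdA : ContDiff ℝ (⊤ : ℕ∞) (Unc (pdA v)) := by
  rw [unc_pdA hv]; exact smooth_D hv eA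

lemma pd_comm (a b : ℝ × (Fin d → ℝ) × ℝ) (q : ℝ × (Fin d → ℝ) × ℝ) :
    fderiv ℝ (fun q => fderiv ℝ (Unc v) q a) q b
      = fderiv ℝ (fun q => fderiv ℝ (Unc v) q b) q a := by
  have hdf : Differentiable ℝ (fderiv ℝ (Unc v)) :=
    (hv.fderiv_right (m := ((⊤:ℕ∞) : WithTop ℕ∞)) hstop).differentiable (by simp)
  rw [fderiv_clm_apply (hdf q) (differentiableAt_const a),
    fderiv_clm_apply (hdf q) (differentiableAt_const b)]
  simp only [fderiv_const, fderiv_const_apply, ContinuousLinearMap.zero_apply, Pi.zero_apply, ContinuousLinearMap.comp_zero, zero_add,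
    ContinuousLinearMap.add_apply, ContinuousLinearMap.flip_apply]
  exact ((hv.contDiffAt).isSymmSndFDerivAt (by simpa using h2top)).eq b a

lemma hasDerivAt_T' (t : ℝ) (x : Fin d → ℝ) (α : ℝ) :
    HasDerivAt (fun s => v s x α) (pdT v t x α) t := by
  rw [pdT_eq hv]; exact hasDerivAt_T hv t x α

lemma hasDerivAt_X' (j : Fin d) (t : ℝ) (x : Fin d → ℝ) (α : ℝ) :
    HasDerivAt (fun s => v t (Function.update x j s) α) (pdX j v t x α) (x j) := by
  rw [pdX_eq hv]; exact hasDerivAt_X hv j t x α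

lemma hasDerivAt_A' (t : ℝ) (x : Fin d → ℝ) (α : ℝ) :
    HasDerivAt (fun s => v t x s) (pdA v t x α) α := by
  rw [pdA_eq hv]; exact hasDerivAt_A hv t x α

lemma pdT_pdX_comm (j : Fin d) (t : ℝ) (x : Fin d → ℝ) (α : ℝ) :
    pdT (pdX j v) t x α = pdX j (pdT v) t x α := by
  rw [pdT_eq (smooth_pdX hv j), pdX_eq (smooth_pdT hv), unc_pdX hv j, unc_pdT hv]
  exact pd_comm hv (eX j) eT (t, x, α)

lemma pdT_pdA_comm (t : ℝ) (x : Fin d → ℝ) (α : ℝ) :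
    pdT (pdA v) t x α = pdA (pdT v) t x α := by
  rw [pdT_eq (smooth_pdA hv), pdA_eq (smooth_pdT hv), unc_pdA hv, unc_pdT hv]
  exact pd_comm hv eA eT (t, x, α)

lemma cont_slice (t : ℝ) : Continuous (fun q : (Fin d → ℝ) × ℝ => v t q.1 q.2) :=
  hv.continuous.comp (continuous_const.prodMk (continuous_fst.prodMk continuous_snd))

lemma cont_joint : Continuous (fun r : ℝ × (Fin d → ℝ) × ℝ => v r.1 r.2.1 r.2.2) :=
  hv.continuous

end V

lemma hasDerivAt_expc (α : ℝ) :
    HasDerivAt (fun s : ℝ => ((Real.exp (-s^2/2) : ℝ) : ℂ))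
      (((-α) * Real.exp (-α^2/2) : ℝ) : ℂ) α := by
  have hg : HasDerivAt (fun s : ℝ => -s^2/2) (-α) α := by
    have := ((hasDerivAt_pow 2 α).neg).div_const 2
    refine this.congr_deriv (Eq.symm ?_)
    simp; ring
  have hr : HasDerivAt (fun s : ℝ => Real.exp (-s^2/2)) (Real.exp (-α^2/2) * (-α)) α := hg.exp
  have h := Complex.ofRealCLM.hasFDerivAt.comp_hasDerivAt α hr
  simp only [Complex.ofRealCLM_apply, Function.comp_def] at h
  refine h.congr_deriv (Eq.symm ?_)
  push_cast; ring

lemma hasDerivAt_expr (α : ℝ) :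
    HasDerivAt (fun s : ℝ => Real.exp (-s^2/2)) ((-α) * Real.exp (-α^2/2)) α := by
  have hg : HasDerivAt (fun s : ℝ => -s^2/2) (-α) α := by
    have := ((hasDerivAt_pow 2 α).neg).div_const 2
    refine this.congr_deriv (Eq.symm ?_)
    simp; ring
  have := hg.exp
  refine this.congr_deriv (Eq.symm ?_)
  ring

section V2
variable {v : ℝ → (Fin d → ℝ) → ℝ → ℂ}

section supp
variable {K : Set ((Fin d → ℝ) × ℝ)} (hKc : IsCompact K)
  (hs : ∀ (t : ℝ) (x : Fin d → ℝ) (α : ℝ), (x, α) ∉ K → v t x α = 0)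
include hs

lemma supp_pdT (t : ℝ) (x : Fin d → ℝ) (α : ℝ) (h : (x, α) ∉ K) : pdT v t x α = 0 := by
  have h0 : (fun s => v s x α) = fun _ => (0 : ℂ) := funext fun s => hs s x α h
  show deriv (fun s => v s x α) t = 0
  rw [h0, deriv_const]

include hKc

lemma supp_pdA (t : ℝ) (x : Fin d → ℝ) (α : ℝ) (h : (x, α) ∉ K) : pdA v t x α = 0 := by
  have hcont : ContinuousAt (fun s : ℝ => ((x, s) : (Fin d → ℝ) × ℝ)) α :=
    (continuous_const.prodMk continuous_id).continuousAt
  have hev : ∀ᶠ s in nhds α, ((x, s) : (Fin d → ℝ) × ℝ) ∈ Kᶜ :=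
    hcont.eventually_mem (hKc.isClosed.isOpen_compl.mem_nhds h)
  have hev2 : (fun s => v t x s) =ᶠ[nhds α] (fun _ => (0 : ℂ)) :=
    hev.mono fun s hsK => hs t x s hsK
  show deriv (fun s => v t x s) α = 0
  rw [hev2.deriv_eq, deriv_const]

lemma supp_pdX (j : Fin d) (t : ℝ) (x : Fin d → ℝ) (α : ℝ) (h : (x, α) ∉ K) :
    pdX j v t x α = 0 := by
  have hcont : ContinuousAt (fun s : ℝ => ((Function.update x j s, α) : (Fin d → ℝ) × ℝ)) (x j) :=
    ((continuous_update_s x j).prodMk continuous_const).continuousAt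
  have hev : ∀ᶠ s in nhds (x j), ((Function.update x j s, α) : (Fin d → ℝ) × ℝ) ∈ Kᶜ := by
    refine hcont.eventually_mem ?_
    rw [show ((Function.update x j (x j), α) : (Fin d → ℝ) × ℝ) = (x, α) by
      rw [Function.update_eq_self]]
    exact hKc.isClosed.isOpen_compl.mem_nhds h
  have hev2 : (fun s => v t (Function.update x j s) α) =ᶠ[nhds (x j)] (fun _ => (0 : ℂ)) :=
    hev.mono fun s hsK => hs t (Function.update x j s) α hsK
  show deriv (fun s => v t (Function.update x j s) α) (x j) = 0
  rw [hev2.deriv_eq, deriv_const]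

end supp

variable (hv : ContDiff ℝ (⊤ : ℕ∞) (Unc v))
include hv

lemma ouDiv_eq (t : ℝ) (x : Fin d → ℝ) (α : ℝ) :
    ouDiv v t x α = (((-α) * Real.exp (-α^2/2) : ℝ) : ℂ) * pdA v t x α
      + ((Real.exp (-α^2/2) : ℝ) : ℂ) * pdA (pdA v) t x α := by
  have h1 := hasDerivAt_expc α
  have h2 := hasDerivAt_A' (smooth_pdA hv) t x α
  have h3 := (h1.mul h2).deriv
  show deriv (fun s => (Real.exp (-s ^ 2 / 2) : ℂ) * pdA v t x s) α = _
  rw [show (fun s : ℝ => (Real.exp (-s ^ 2 / 2) : ℂ) * pdA v t x s)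
      = fun s => ((Real.exp (-s^2/2) : ℝ) : ℂ) * pdA v t x s from rfl]
  exact h3

end V2

/-! ### Fubini-type vanishing lemmas -/

lemma integral_pdA_zero {d : ℕ} {K : Set ((Fin d → ℝ) × ℝ)} (hKc : IsCompact K)
    (w W : (Fin d → ℝ) × ℝ → ℝ) (hW : Continuous W)
    (hws : ∀ q ∉ K, w q = 0) (hWs : ∀ q ∉ K, W q = 0)
    (hder : ∀ x α, HasDerivAt (fun s => w (x, s)) (W (x, α)) α) :
    ∫ q, W q = 0 := by
  have hWsupp : HasCompactSupport W := HasCompactSupport.intro hKc hWs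
  have hWint : Integrable W := hW.integrable_of_hasCompactSupport hWsupp
  rw [Measure.volume_eq_prod] at hWint ⊢
  rw [MeasureTheory.integral_prod _ hWint]
  have hin : ∀ x : Fin d → ℝ, (∫ α : ℝ, W (x, α)) = 0 := by
    intro x
    have hderiv : deriv (fun s => w (x, s)) = fun s => W (x, s) :=
      funext fun s => ((hder x s).deriv)
    have hdiff : Differentiable ℝ (fun s => w (x, s)) := fun s => (hder x s).differentiableAt
    have hc1 : ContDiff ℝ 1 (fun s => w (x, s)) := by
      rw [contDiff_one_iff_deriv]
      exact ⟨hdiff, by rw [hderiv]; exact hW.comp (continuous_const.prodMk continuous_id)⟩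
    have hcs : HasCompactSupport (fun s => w (x, s)) := by
      refine HasCompactSupport.intro (hKc.image continuous_snd) fun s hs => ?_
      exact hws _ fun hq => hs ⟨_, hq, rfl⟩
    calc (∫ α : ℝ, W (x, α)) = ∫ α : ℝ, deriv (fun s => w (x, s)) α := by rw [hderiv]
      _ = 0 := integral_deriv_zero _ hc1 hcs
  simp only [hin, integral_zero]

lemma integral_pdX_zero {n : ℕ} {K : Set ((Fin (n+1) → ℝ) × ℝ)} (hKc : IsCompact K)
    (j : Fin (n+1)) (w W : (Fin (n+1) → ℝ) × ℝ → ℝ) (hW : Continuous W)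
    (hws : ∀ q ∉ K, w q = 0) (hWs : ∀ q ∉ K, W q = 0)
    (hder : ∀ x α, HasDerivAt (fun s => w (Function.update x j s, α)) (W (x, α)) (x j)) :
    ∫ q, W q = 0 := by
  have hWsupp : HasCompactSupport W := HasCompactSupport.intro hKc hWs
  have hWint : Integrable W := hW.integrable_of_hasCompactSupport hWsupp
  rw [Measure.volume_eq_prod] at hWint ⊢
  rw [MeasureTheory.integral_prod_symm _ hWint]
  have hin : ∀ α : ℝ, (∫ x : Fin (n+1) → ℝ, W (x, α)) = 0 := by
    intro α
    have hfc : Continuous (fun x : Fin (n+1) → ℝ => W (x, α)) :=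
      hW.comp (continuous_id.prodMk continuous_const)
    have hfs : HasCompactSupport (fun x : Fin (n+1) → ℝ => W (x, α)) := by
      refine HasCompactSupport.intro (hKc.image continuous_fst) fun x hx => ?_
      exact hWs _ fun hq => hx ⟨_, hq, rfl⟩
    have hfint : Integrable (fun x : Fin (n+1) → ℝ => W (x, α)) :=
      hfc.integrable_of_hasCompactSupport hfs
    set e := MeasurableEquiv.piFinSuccAbove (fun _ : Fin (n+1) => ℝ) j with he
    have hmp : MeasurePreserving e volume volume := volume_preserving_piFinSuccAbove _ j
    have hmps : MeasurePreserving e.symm volume volume := hmp.symm e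
    have h1 : (∫ z : ℝ × (Fin n → ℝ), W (e.symm z, α)) = ∫ x : Fin (n+1) → ℝ, W (x, α) :=
      hmps.integral_comp e.symm.measurableEmbedding (fun x => W (x, α))
    have hint2 : Integrable (fun z : ℝ × (Fin n → ℝ) => W (e.symm z, α)) := by
      have := (hmps.integrable_comp_emb e.symm.measurableEmbedding
        (g := fun x : Fin (n+1) → ℝ => W (x, α))).2 hfint
      exact this
    rw [← h1]
    rw [Measure.volume_eq_prod] at hint2 ⊢
    rw [MeasureTheory.integral_prod_symm _ hint2]
    have hinner : ∀ y : Fin n → ℝ, (∫ s : ℝ, W (e.symm (s, y), α)) = 0 := by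
      intro y
      have hsymm : ∀ s : ℝ, e.symm (s, y) = (j.insertNth s y : Fin (n+1) → ℝ) := fun s => rfl
      have hupd : ∀ s s' : ℝ,
          Function.update (j.insertNth s y : Fin (n+1) → ℝ) j s'
            = (j.insertNth s' y : Fin (n+1) → ℝ) :=
        fun s s' => Fin.update_insertNth (α := fun _ : Fin (n+1) => ℝ) j s s' y
      have hg : ∀ s : ℝ, HasDerivAt (fun s' => w ((j.insertNth s' y : Fin (n+1) → ℝ), α))
          (W ((j.insertNth s y : Fin (n+1) → ℝ), α)) s := by
        intro s
        have h0 := hder (j.insertNth s y : Fin (n+1) → ℝ) α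
        have e2 : (fun s' => w (Function.update (j.insertNth s y : Fin (n+1) → ℝ) j s', α))
            = fun s' => w ((j.insertNth s' y : Fin (n+1) → ℝ), α) := by
          funext s'; rw [hupd s s']
        rw [e2, Fin.insertNth_apply_same] at h0
        exact h0
      have hgy : Continuous (fun s : ℝ => (j.insertNth s y : Fin (n+1) → ℝ)) := by
        have h4 : (fun s : ℝ => (j.insertNth s y : Fin (n+1) → ℝ))
            = fun s => Function.update (j.insertNth 0 y : Fin (n+1) → ℝ) j s := by
          funext s; rw [hupd 0 s]
        rw [h4]; exact continuous_update_s _ j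
      have hderiv : deriv (fun s' => w ((j.insertNth s' y : Fin (n+1) → ℝ), α))
          = fun s => W ((j.insertNth s y : Fin (n+1) → ℝ), α) := funext fun s => (hg s).deriv
      have hc1 : ContDiff ℝ 1 (fun s' => w ((j.insertNth s' y : Fin (n+1) → ℝ), α)) := by
        rw [contDiff_one_iff_deriv]
        refine ⟨fun s => (hg s).differentiableAt, ?_⟩
        rw [hderiv]
        exact hW.comp (hgy.prodMk continuous_const)
      have hcs : HasCompactSupport (fun s' => w ((j.insertNth s' y : Fin (n+1) → ℝ), α)) := by
        refine HasCompactSupport.intro (hKc.image ((continuous_apply j).comp continuous_fst))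
          fun s hs => ?_
        refine hws _ fun hq => hs ⟨_, hq, ?_⟩
        simp [Fin.insertNth_apply_same]
      calc (∫ s : ℝ, W (e.symm (s, y), α))
          = ∫ s : ℝ, W ((j.insertNth s y : Fin (n+1) → ℝ), α) := by simp only [hsymm]
        _ = ∫ s : ℝ, deriv (fun s' => w ((j.insertNth s' y : Fin (n+1) → ℝ), α)) s := by
            rw [hderiv]
        _ = 0 := integral_deriv_zero _ hc1 hcs
    simp only [hinner, integral_zero]
  simp only [hin, integral_zero]

/-! ### pointwise time derivative of the energy density -/

lemma hdRe {f : ℝ → ℂ} {f' : ℂ} {t : ℝ} (h : HasDerivAt f f' t) :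
    HasDerivAt (fun s => (f s).re) f'.re t :=
  (Complex.reCLM.hasFDerivAt.comp_hasDerivAt t h : _)

lemma hdIm {f : ℝ → ℂ} {f' : ℂ} {t : ℝ} (h : HasDerivAt f f' t) :
    HasDerivAt (fun s => (f s).im) f'.im t :=
  (Complex.imCLM.hasFDerivAt.comp_hasDerivAt t h : _)

lemma hasDerivAt_sq {f : ℝ → ℂ} {f' : ℂ} {t : ℝ} (h : HasDerivAt f f' t) :
    HasDerivAt (fun s => ‖f s‖ ^ 2)
      (2 * (f' * (starRingEnd ℂ) (f t)).re) t := by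
  have hre := hdRe h
  have him := hdIm h
  have h2 := (hre.mul hre).add (him.mul him)
  have hfun : (fun s => ‖f s‖ ^ 2)
      = fun s => (f s).re * (f s).re + (f s).im * (f s).im := by
    funext s
    rw [Complex.sq_norm, Complex.normSq_apply]
  rw [hfun]
  refine h2.congr_deriv (Eq.symm ?_)
  simp [Complex.mul_re, Complex.conj_re, Complex.conj_im]
  ring

lemma hasDerivAt_rpow_abs {f : ℝ → ℂ} {f' : ℂ} {t : ℝ} {p : ℝ} (hp : 0 < p)
    (h : HasDerivAt f f' t) :
    HasDerivAt (fun s => ‖f s‖ ^ (p + 2))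
      ((p + 2) * ‖f t‖ ^ p * (f' * (starRingEnd ℂ) (f t)).re) t := by
  have hn := hasDerivAt_sq h
  have hr : HasDerivAt (fun y : ℝ => y ^ ((p + 2) / 2))
      (((p + 2) / 2) * (‖f t‖ ^ 2) ^ ((p + 2) / 2 - 1)) (‖f t‖ ^ 2) :=
    Real.hasDerivAt_rpow_const (Or.inr (by linarith))
  have hc := hr.comp t hn
  have habs : ∀ (r : ℝ), (‖f t‖ ^ 2 : ℝ) ^ r = ‖f t‖ ^ (2 * r) := by
    intro r
    rw [← Real.rpow_natCast (‖f t‖) 2, ← Real.rpow_mul (norm_nonneg _)]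
    norm_num
  have hfun : (fun s => ‖f s‖ ^ (p + 2))
      = (fun y : ℝ => y ^ ((p + 2) / 2)) ∘ (fun s => ‖f s‖ ^ 2) := by
    funext s
    simp only [Function.comp_apply]
    rw [← Real.rpow_natCast (‖f s‖) 2, ← Real.rpow_mul (norm_nonneg _)]
    norm_num
    rw [show (2:ℝ) * ((p + 2) / 2) = p + 2 by ring]
  rw [hfun]
  refine hc.congr_deriv (Eq.symm ?_)
  rw [habs]
  have h2 : 2 * ((p + 2) / 2 - 1) = p := by ring
  rw [h2]
  ring

lemma key_alg (T A AA U L O : ℂ) (C E aE : ℝ)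
    (hP : Complex.I * T + L + O = (C : ℂ) * U)
    (hO : O = (aE : ℂ) * A + (E : ℂ) * AA) :
    (T * (starRingEnd ℂ) L).re + aE * (T * (starRingEnd ℂ) A).re
      + E * (T * (starRingEnd ℂ) AA).re = C * (T * (starRingEnd ℂ) U).re := by
  have hL : L = (C : ℂ) * U - Complex.I * T - O := by linear_combination hP
  rw [hL, hO]
  simp only [map_sub, map_add, map_mul, Complex.conj_ofReal, Complex.conj_I,
    Complex.mul_re, Complex.mul_im, Complex.sub_re, Complex.sub_im, Complex.add_re,
    Complex.add_im, Complex.conj_re, Complex.conj_im, Complex.ofReal_re, Complex.ofReal_im,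
    Complex.I_re, Complex.I_im, Complex.neg_re, Complex.neg_im]
  ring

/-! ### the energy density and its time derivative -/

def eden (p : ℝ) (u : ℝ → (Fin d → ℝ) → ℝ → ℂ) : ℝ → ((Fin d → ℝ) × ℝ) → ℝ := fun t q =>
  (1 / 2) * ∑ j : Fin d, ‖pdX j u t q.1 q.2‖ ^ 2
    + (1 / 2) * ‖pdA u t q.1 q.2‖ ^ 2 * Real.exp (-q.2 ^ 2 / 2)
    + (1 / (p + 2)) * ‖u t q.1 q.2‖ ^ (p + 2)

def Fd (p : ℝ) (u : ℝ → (Fin d → ℝ) → ℝ → ℂ) : ℝ → ((Fin d → ℝ) × ℝ) → ℝ := fun t q =>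
  (∑ j : Fin d, (pdT (pdX j u) t q.1 q.2 * (starRingEnd ℂ) (pdX j u t q.1 q.2)).re)
    + (pdT (pdA u) t q.1 q.2 * (starRingEnd ℂ) (pdA u t q.1 q.2)).re * Real.exp (-q.2 ^ 2 / 2)
    + ‖u t q.1 q.2‖ ^ p * (pdT u t q.1 q.2 * (starRingEnd ℂ) (u t q.1 q.2)).re

def WX (u : ℝ → (Fin d → ℝ) → ℝ → ℂ) (j : Fin d) : ℝ → ((Fin d → ℝ) × ℝ) → ℝ := fun t q =>
  (pdX j (pdT u) t q.1 q.2 * (starRingEnd ℂ) (pdX j u t q.1 q.2)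
    + pdT u t q.1 q.2 * (starRingEnd ℂ) (pdX j (pdX j u) t q.1 q.2)).re

def WA (u : ℝ → (Fin d → ℝ) → ℝ → ℂ) : ℝ → ((Fin d → ℝ) × ℝ) → ℝ := fun t q =>
  ((-q.2) * Real.exp (-q.2 ^ 2 / 2)) * (pdT u t q.1 q.2 * (starRingEnd ℂ) (pdA u t q.1 q.2)).re
    + Real.exp (-q.2 ^ 2 / 2) * (pdA (pdT u) t q.1 q.2 * (starRingEnd ℂ) (pdA u t q.1 q.2)
        + pdT u t q.1 q.2 * (starRingEnd ℂ) (pdA (pdA u) t q.1 q.2)).re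

section Main
variable {p : ℝ} {u : ℝ → (Fin d → ℝ) → ℝ → ℂ}
  (hp : 0 < p) (hsm : ContDiff ℝ (⊤ : ℕ∞) (Unc u))
include hp hsm

lemma eden_hasDeriv (t : ℝ) (q : (Fin d → ℝ) × ℝ) :
    HasDerivAt (fun s => eden p u s q) (Fd p u t q) t := by
  obtain ⟨x, α⟩ := q
  have h1 : ∀ j : Fin d, HasDerivAt (fun s => ‖pdX j u s x α‖ ^ 2)
      (2 * (pdT (pdX j u) t x α * (starRingEnd ℂ) (pdX j u t x α)).re) t :=
    fun j => hasDerivAt_sq (hasDerivAt_T' (smooth_pdX hsm j) t x α)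
  have hsum := HasDerivAt.fun_sum (fun j (_ : j ∈ Finset.univ) => h1 j)
  have h2 := hasDerivAt_sq (hasDerivAt_T' (smooth_pdA hsm) t x α)
  have h3 := hasDerivAt_rpow_abs hp (hasDerivAt_T' hsm t x α)
  have total := ((hsum.const_mul (1/2 : ℝ)).add
    ((h2.const_mul (1/2 : ℝ)).mul_const (Real.exp (-α ^ 2 / 2)))).add
    (h3.const_mul (1/(p+2) : ℝ))
  refine total.congr_deriv (Eq.symm ?_)
  show Fd p u t (x, α) = _
  simp only [Fd]
  have e1 : (1/2 : ℝ) * ∑ j : Fin d,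
      2 * (pdT (pdX j u) t x α * (starRingEnd ℂ) (pdX j u t x α)).re
      = ∑ j : Fin d, (pdT (pdX j u) t x α * (starRingEnd ℂ) (pdX j u t x α)).re := by
    rw [Finset.mul_sum]
    exact Finset.sum_congr rfl fun j _ => by ring
  rw [e1]
  have hps : (p + 2) ≠ 0 := by linarith
  field_simp

lemma Fd_eq_div (hpde : ∀ (t : ℝ) (x : Fin d → ℝ) (α : ℝ),
      Complex.I * pdT u t x α + lapX u t x α + ouDiv u t x α
        = ((‖u t x α‖ ^ p : ℝ) : ℂ) * u t x α)
    (t : ℝ) (q : (Fin d → ℝ) × ℝ) :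
    Fd p u t q = (∑ j : Fin d, WX u j t q) + WA u t q := by
  obtain ⟨x, α⟩ := q
  have hkey := key_alg (pdT u t x α) (pdA u t x α) (pdA (pdA u) t x α) (u t x α)
    (lapX u t x α) (ouDiv u t x α) (‖u t x α‖ ^ p) (Real.exp (-α ^ 2 / 2))
    ((-α) * Real.exp (-α ^ 2 / 2)) (hpde t x α)
    (by
      have := ouDiv_eq hsm t x α
      push_cast at this ⊢
      exact this)
  have hconjL : (pdT u t x α * (starRingEnd ℂ) (lapX u t x α)).re
      = ∑ j : Fin d, (pdT u t x α * (starRingEnd ℂ) (pdX j (pdX j u) t x α)).re := by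
    show (pdT u t x α * (starRingEnd ℂ) (∑ j : Fin d, pdX j (pdX j u) t x α)).re = _
    rw [map_sum, Finset.mul_sum, Complex.re_sum]
  rw [hconjL] at hkey
  simp only [Fd, WX, WA]
  simp only [pdT_pdX_comm hsm, pdT_pdA_comm hsm]
  simp only [Complex.add_re]
  rw [Finset.sum_add_distrib]
  linarith [hkey]

end Main

set_option maxHeartbeats 1000000 in
theorem main {n : ℕ} {p : ℝ} {u : ℝ → (Fin (n+1) → ℝ) → ℝ → ℂ}
    (hp : 0 < p) (hsm : ContDiff ℝ (⊤ : ℕ∞) (Unc u))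
    {K : Set ((Fin (n+1) → ℝ) × ℝ)} (hKc : IsCompact K)
    (hKs : ∀ (t : ℝ) (x : Fin (n+1) → ℝ) (α : ℝ), (x, α) ∉ K → u t x α = 0)
    (hpde : ∀ (t : ℝ) (x : Fin (n+1) → ℝ) (α : ℝ),
      Complex.I * pdT u t x α + lapX u t x α + ouDiv u t x α
        = ((‖u t x α‖ ^ p : ℝ) : ℂ) * u t x α)
    (t : ℝ) :
    ∫ q, eden p u t q = ∫ q, eden p u 0 q := by
  -- smoothness of all derived functions
  have sX : ∀ j, ContDiff ℝ (⊤:ℕ∞) (Unc (pdX j u)) := fun j => smooth_pdX hsm j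
  have sT : ContDiff ℝ (⊤:ℕ∞) (Unc (pdT u)) := smooth_pdT hsm
  have sA : ContDiff ℝ (⊤:ℕ∞) (Unc (pdA u)) := smooth_pdA hsm
  -- support of derived functions
  have hsTs : ∀ (t : ℝ) x α, (x, α) ∉ K → pdT u t x α = 0 := supp_pdT hKs
  have hsXs : ∀ j (t : ℝ) x α, (x, α) ∉ K → pdX j u t x α = 0 := fun j => supp_pdX hKc hKs j
  have hsAs : ∀ (t : ℝ) x α, (x, α) ∉ K → pdA u t x α = 0 := supp_pdA hKc hKs
  -- continuity of rpow with nonneg exponent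
  have crpow : ∀ r : ℝ, 0 ≤ r → Continuous fun y : ℝ => y ^ r := fun r hr =>
    continuous_iff_continuousAt.2 fun y => Real.continuousAt_rpow_const y r (Or.inr hr)
  have cexp : Continuous fun q : (Fin (n+1) → ℝ) × ℝ => Real.exp (-q.2 ^ 2 / 2) :=
    Real.continuous_exp.comp ((((continuous_pow 2).comp continuous_snd).neg).div_const 2)
  -- continuity of eden in q
  have contEden : ∀ s : ℝ, Continuous (eden p u s) := by
    intro s
    refine Continuous.add (Continuous.add ?_ ?_) ?_
    · exact continuous_const.mul (continuous_finset_sum _ fun j _ =>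
        ((continuous_norm.comp (cont_slice (sX j) s)).pow 2))
    · exact (continuous_const.mul ((continuous_norm.comp (cont_slice sA s)).pow 2)).mul cexp
    · exact continuous_const.mul ((crpow (p+2) (by linarith)).comp
        (continuous_norm.comp (cont_slice hsm s)))
  -- joint continuity of Fd
  have contFdJ : Continuous (fun r : ℝ × ((Fin (n+1) → ℝ) × ℝ) => Fd p u r.1 r.2) := by
    unfold Fd
    refine Continuous.add (Continuous.add ?_ ?_) ?_
    · refine continuous_finset_sum _ fun j _ => Complex.continuous_re.comp ?_
      exact (cont_joint (smooth_pdT (sX j))).mul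
        (Complex.continuous_conj.comp (cont_joint (sX j)))
    · exact (Complex.continuous_re.comp ((cont_joint (smooth_pdT sA)).mul
        (Complex.continuous_conj.comp (cont_joint sA)))).mul (cexp.comp continuous_snd)
    · exact ((crpow p hp.le).comp (continuous_norm.comp (cont_joint hsm))).mul
        (Complex.continuous_re.comp ((cont_joint sT).mul
          (Complex.continuous_conj.comp (cont_joint hsm))))
  have contFd : ∀ s : ℝ, Continuous (fun q => Fd p u s q) := by
    intro s
    unfold Fd
    refine Continuous.add (Continuous.add ?_ ?_) ?_
    · refine continuous_finset_sum _ fun j _ => Complex.continuous_re.comp ?_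
      exact (cont_slice (smooth_pdT (sX j)) s).mul
        (Complex.continuous_conj.comp (cont_slice (sX j) s))
    · exact (Complex.continuous_re.comp ((cont_slice (smooth_pdT sA) s).mul
        (Complex.continuous_conj.comp (cont_slice sA s)))).mul cexp
    · exact ((crpow p hp.le).comp (continuous_norm.comp (cont_slice hsm s))).mul
        (Complex.continuous_re.comp ((cont_slice sT s).mul
          (Complex.continuous_conj.comp (cont_slice hsm s))))
  -- vanishing of Fd off K
  have hFzero : ∀ (s : ℝ) q, q ∉ K → Fd p u s q = 0 := by
    intro s q hq
    have hq' : (q.1, q.2) ∉ K := by rwa [Prod.mk.eta]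
    simp only [Fd]
    rw [hKs s q.1 q.2 hq', hsAs s q.1 q.2 hq']
    have hXj : ∀ j : Fin (n+1), pdX j u s q.1 q.2 = 0 := fun j => hsXs j s q.1 q.2 hq'
    simp [hXj]
  -- vanishing of eden off K
  have hedenzero : ∀ (s : ℝ) q, q ∉ K → eden p u s q = 0 := by
    intro s q hq
    have hq' : (q.1, q.2) ∉ K := by rwa [Prod.mk.eta]
    simp only [eden]
    rw [hKs s q.1 q.2 hq', hsAs s q.1 q.2 hq']
    have hXj : ∀ j : Fin (n+1), pdX j u s q.1 q.2 = 0 := fun j => hsXs j s q.1 q.2 hq'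
    simp [hXj, Real.zero_rpow (show p + 2 ≠ 0 by linarith)]
  -- the integral of Fd vanishes (divergence structure)
  have hint0 : ∀ s : ℝ, (∫ q, Fd p u s q) = 0 := by
    intro s
    -- the pieces
    have hWXder : ∀ (j : Fin (n+1)) x α,
        HasDerivAt (fun r => (pdT u s (Function.update x j r) α
            * (starRingEnd ℂ) (pdX j u s (Function.update x j r) α)).re)
          (WX u j s (x, α)) (x j) := by
      intro j x α
      have h := hdRe ((hasDerivAt_X' sT j s x α).mul ((hasDerivAt_X' (sX j) j s x α).star))
      simp only [Function.update_eq_self] at h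
      exact h
    have hWAder : ∀ x α,
        HasDerivAt (fun r => Real.exp (-r ^ 2 / 2) * (pdT u s x r
            * (starRingEnd ℂ) (pdA u s x r)).re)
          (WA u s (x, α)) α := by
      intro x α
      exact (hasDerivAt_expr α).mul
        (hdRe ((hasDerivAt_A' sT s x α).mul ((hasDerivAt_A' sA s x α).star)))
    have contWX : ∀ j : Fin (n+1), Continuous (WX u j s) := by
      intro j
      unfold WX
      exact Complex.continuous_re.comp
        (((cont_slice (smooth_pdX sT j) s).mul
            (Complex.continuous_conj.comp (cont_slice (sX j) s))).add
          ((cont_slice sT s).mul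
            (Complex.continuous_conj.comp (cont_slice (smooth_pdX (sX j) j) s))))
    have contWA : Continuous (WA u s) := by
      unfold WA
      refine Continuous.add ?_ ?_
      · exact (continuous_snd.neg.mul cexp).mul (Complex.continuous_re.comp
          ((cont_slice sT s).mul (Complex.continuous_conj.comp (cont_slice sA s))))
      · exact cexp.mul (Complex.continuous_re.comp
          (((cont_slice (smooth_pdA sT) s).mul
              (Complex.continuous_conj.comp (cont_slice sA s))).add
            ((cont_slice sT s).mul
              (Complex.continuous_conj.comp (cont_slice (smooth_pdA sA) s)))))
    have hWXzero : ∀ (j : Fin (n+1)) q, q ∉ K → WX u j s q = 0 := by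
      intro j q hq
      have hq' : (q.1, q.2) ∉ K := by rwa [Prod.mk.eta]
      simp only [WX]
      rw [hsTs s q.1 q.2 hq', hsXs j s q.1 q.2 hq']
      simp
    have hWAzero : ∀ q, q ∉ K → WA u s q = 0 := by
      intro q hq
      have hq' : (q.1, q.2) ∉ K := by rwa [Prod.mk.eta]
      simp only [WA]
      rw [hsTs s q.1 q.2 hq', hsAs s q.1 q.2 hq']
      simp
    have hiX : ∀ j : Fin (n+1), (∫ q, WX u j s q) = 0 := by
      intro j
      refine integral_pdX_zero hKc j
        (fun q => (pdT u s q.1 q.2 * (starRingEnd ℂ) (pdX j u s q.1 q.2)).re)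
        (WX u j s) (contWX j) ?_ (hWXzero j) ?_
      · intro q hq
        have hq' : (q.1, q.2) ∉ K := by rwa [Prod.mk.eta]
        show (pdT u s q.1 q.2 * (starRingEnd ℂ) (pdX j u s q.1 q.2)).re = 0
        rw [hsTs s q.1 q.2 hq']
        simp
      · intro x α
        exact hWXder j x α
    have hiA : (∫ q, WA u s q) = 0 := by
      refine integral_pdA_zero hKc
        (fun q => Real.exp (-q.2 ^ 2 / 2)
          * (pdT u s q.1 q.2 * (starRingEnd ℂ) (pdA u s q.1 q.2)).re)
        (WA u s) contWA ?_ hWAzero ?_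
      · intro q hq
        have hq' : (q.1, q.2) ∉ K := by rwa [Prod.mk.eta]
        show Real.exp (-q.2 ^ 2 / 2)
            * (pdT u s q.1 q.2 * (starRingEnd ℂ) (pdA u s q.1 q.2)).re = 0
        rw [hsTs s q.1 q.2 hq']
        simp
      · intro x α
        exact hWAder x α
    have intWX : ∀ j : Fin (n+1), Integrable (WX u j s) := fun j =>
      (contWX j).integrable_of_hasCompactSupport (HasCompactSupport.intro hKc (hWXzero j))
    have intWA : Integrable (WA u s) :=
      contWA.integrable_of_hasCompactSupport (HasCompactSupport.intro hKc hWAzero)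
    have hFdeq : (∫ q, Fd p u s q) = ∫ q, ((∑ j : Fin (n+1), WX u j s q) + WA u s q) := by
      congr 1
      funext q
      exact Fd_eq_div hp hsm hpde s q
    rw [hFdeq, integral_add (integrable_finset_sum _ fun j _ => intWX j) intWA,
      integral_finset_sum _ (fun j _ => intWX j)]
    simp [hiX, hiA]
  -- derivative of the energy is zero at every time
  have hDer : ∀ t₀ : ℝ, HasDerivAt (fun r => ∫ q, eden p u r q) 0 t₀ := by
    intro t₀
    obtain ⟨C, hC⟩ := (isCompact_Icc (a := t₀ - 1) (b := t₀ + 1)).prod hKc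
      |>.exists_bound_of_continuousOn contFdJ.continuousOn
    have h_bound : ∀ q, ∀ r ∈ Metric.ball t₀ 1, ‖Fd p u r q‖ ≤ K.indicator (fun _ => C) q := by
      intro q r hr
      by_cases hq : q ∈ K
      · rw [Set.indicator_of_mem hq]
        refine hC (r, q) ⟨?_, hq⟩
        rw [Metric.mem_ball, Real.dist_eq] at hr
        have h' := abs_lt.1 hr
        exact ⟨by linarith [h'.1], by linarith [h'.2]⟩
      · rw [Set.indicator_of_notMem hq, hFzero r q hq]
        simp
    have bound_int : Integrable (K.indicator (fun _ => C)) := by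
      rw [integrable_indicator_iff hKc.measurableSet]
      exact integrableOn_const hKc.measure_lt_top.ne
    have int_eden : Integrable (eden p u t₀) :=
      (contEden t₀).integrable_of_hasCompactSupport
        (HasCompactSupport.intro hKc (hedenzero t₀))
    have key := hasDerivAt_integral_of_dominated_loc_of_deriv_le
      (F := fun r q => eden p u r q) (F' := fun r q => Fd p u r q)
      (bound := K.indicator (fun _ => C)) (Metric.ball_mem_nhds t₀ one_pos)
      (Filter.Eventually.of_forall fun r => (contEden r).aestronglyMeasurable)
      int_eden
      ((contFd t₀).aestronglyMeasurable)
      (Filter.Eventually.of_forall h_bound)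
      bound_int
      (Filter.Eventually.of_forall fun q r _ => eden_hasDeriv hp hsm r q)
    have h2 := key.2
    rwa [hint0 t₀] at h2
  have hDiff : Differentiable ℝ (fun r => ∫ q, eden p u r q) :=
    fun r => (hDer r).differentiableAt
  have hd0 : ∀ r, deriv (fun r => ∫ q, eden p u r q) r = 0 := fun r => (hDer r).deriv
  exact is_const_of_deriv_eq_zero hDiff hd0 t 0

end Stmt8Aux
end

/-- Conservation of energy for the divergence-form model. -/
theorem stmt8 (d : ℕ) (hd : 1 ≤ d) (p : ℝ) (hp : 0 < p)
    (u : ℝ → (Fin d → ℝ) → ℝ → ℂ) (hu : IsUCSSolutionDiv d p u) (t : ℝ) :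
    ∫ q : (Fin d → ℝ) × ℝ,
        ((1 / 2) * ∑ j : Fin d, ‖pdX j u t q.1 q.2‖ ^ 2
          + (1 / 2) * ‖pdA u t q.1 q.2‖ ^ 2 * Real.exp (-q.2 ^ 2 / 2)
          + (1 / (p + 2)) * ‖u t q.1 q.2‖ ^ (p + 2))
      = ∫ q : (Fin d → ℝ) × ℝ,
        ((1 / 2) * ∑ j : Fin d, ‖pdX j u 0 q.1 q.2‖ ^ 2
          + (1 / 2) * ‖pdA u 0 q.1 q.2‖ ^ 2 * Real.exp (-q.2 ^ 2 / 2)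
          + (1 / (p + 2)) * ‖u 0 q.1 q.2‖ ^ (p + 2)) := by
  obtain ⟨n, rfl⟩ : ∃ n, d = n + 1 := ⟨d - 1, (Nat.succ_pred_eq_of_pos hd).symm⟩
  obtain ⟨hsm, ⟨K, hKc, hKs⟩, hpde⟩ := hu
  exact Stmt8Aux.main hp hsm hKc hKs hpde t
end

section
/- (Pohozaev identity) Let d ≥ 1 and let u : ℝ^d → ℂ be infinitely differentiable with compact support. Then −Re ∫_{ℝ^d} Δu(x)·conj( (d/2)·u(x) + ∑_{j=1}^d x_j·∂_{x_j}u(x) ) dx = ∫_{ℝ^d} ∑_{j=1}^d |∂_{x_j}u(x)|² dx. -/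
open MeasureTheory

noncomputable section

/-- Partial derivative in the `j`-th coordinate for a function on `ℝ^d`. -/
def pdXs {d : ℕ} (j : Fin d) (u : (Fin d → ℝ) → ℂ) : (Fin d → ℝ) → ℂ :=
  fun x => deriv (fun s => u (Function.update x j s)) (x j)

end

noncomputable section Aux
variable {d : ℕ} {F : Type*} [NormedAddCommGroup F] [NormedSpace ℝ F]

/-- generic coordinate partial derivative -/
def pd (j : Fin d) (f : (Fin d → ℝ) → F) : (Fin d → ℝ) → F :=
  fun x => deriv (fun s => f (Function.update x j s)) (x j)

lemma hasDerivAt_slice {f : (Fin d → ℝ) → F} {x : Fin d → ℝ}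
    (hf : DifferentiableAt ℝ f x) (j : Fin d) :
    HasDerivAt (fun s => f (Function.update x j s))
      (fderiv ℝ f x (Pi.single j 1)) (x j) := by
  have h1 := hasDerivAt_update x j (x j)
  have h2 : DifferentiableAt ℝ f (Function.update x j (x j)) := by
    rwa [Function.update_eq_self]
  simpa [Function.update_eq_self, Function.comp_def] using h2.hasFDerivAt.comp_hasDerivAt (x j) h1

lemma pd_eq {f : (Fin d → ℝ) → F} {x : Fin d → ℝ}
    (hf : DifferentiableAt ℝ f x) (j : Fin d) :
    pd j f x = fderiv ℝ f x (Pi.single j 1) :=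
  (hasDerivAt_slice hf j).deriv

lemma pd_eq_fun {f : (Fin d → ℝ) → F} (hf : Differentiable ℝ f) (j : Fin d) :
    pd j f = fun x => fderiv ℝ f x (Pi.single j 1) :=
  funext fun x => pd_eq (hf x) j

lemma cont_pd {f : (Fin d → ℝ) → F} (hf : ContDiff ℝ (⊤ : ℕ∞) f) (j : Fin d) :
    ContDiff ℝ (⊤ : ℕ∞) (pd j f) := by
  rw [pd_eq_fun (hf.differentiable (by simp)) j]
  exact (hf.fderiv_right (by exact_mod_cast le_top)).clm_apply contDiff_const

lemma supp_pd {f : (Fin d → ℝ) → F} (hf : Differentiable ℝ f)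
    (hs : HasCompactSupport f) (j : Fin d) :
    HasCompactSupport (pd j f) := by
  rw [pd_eq_fun hf j]
  exact (hs.fderiv ℝ).comp_left (g := fun L : (Fin d → ℝ) →L[ℝ] F => L (Pi.single j 1)) (by simp)


lemma pd_mul {f g : (Fin d → ℝ) → ℝ} {x : Fin d → ℝ}
    (hf : DifferentiableAt ℝ f x) (hg : DifferentiableAt ℝ g x) (j : Fin d) :
    pd j (fun y => f y * g y) x = pd j f x * g x + f x * pd j g x := by
  have h := ((hasDerivAt_slice hf j).mul (hasDerivAt_slice hg j)).deriv
  rw [Function.update_eq_self] at h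
  show deriv (fun s => f (Function.update x j s) * g (Function.update x j s)) (x j) = _
  rw [pd_eq hf j, pd_eq hg j]
  exact h

lemma pd_proj (i j : Fin d) (x : Fin d → ℝ) :
    pd j (fun y : Fin d → ℝ => y i) x = if i = j then 1 else 0 := by
  have hdiff : DifferentiableAt ℝ (fun y : Fin d → ℝ => y i) x :=
    (ContinuousLinearMap.proj (R := ℝ) (φ := fun _ : Fin d => ℝ) i).differentiableAt
  rw [pd_eq hdiff j]
  have : fderiv ℝ (fun y : Fin d → ℝ => y i) x
      = ContinuousLinearMap.proj (R := ℝ) (φ := fun _ : Fin d => ℝ) i :=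
    (ContinuousLinearMap.proj (R := ℝ) (φ := fun _ : Fin d => ℝ) i).fderiv
  rw [this]
  simp [ContinuousLinearMap.proj_apply, Pi.single_apply]

lemma pd_comm {f : (Fin d → ℝ) → ℝ} (hf : ContDiff ℝ (⊤ : ℕ∞) f) (j k : Fin d)
    (x : Fin d → ℝ) :
    pd k (pd j f) x = pd j (pd k f) x := by
  have hfd : Differentiable ℝ f := hf.differentiable (by simp)
  have hfd2 : Differentiable ℝ (fderiv ℝ f) :=
    (hf.fderiv_right (m := (⊤ : ℕ∞)) (by exact_mod_cast le_top)).differentiable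
      (by simp)
  have key : ∀ v w : Fin d → ℝ,
      fderiv ℝ (fderiv ℝ f) x v w = fderiv ℝ (fderiv ℝ f) x w v :=
    second_derivative_symmetric (fun y => (hfd y).hasFDerivAt) (hfd2 x).hasFDerivAt
  have comp : ∀ v : Fin d → ℝ, ∀ y,
      pd k (fun z => fderiv ℝ f z v) y = fderiv ℝ (fderiv ℝ f) y (Pi.single k 1) v := by
    intro v y
    have hd : DifferentiableAt ℝ (fun z => fderiv ℝ f z v) y :=
      (hfd2 y).clm_apply (differentiableAt_const v)
    rw [pd_eq hd k, fderiv_clm_apply (hfd2 y) (differentiableAt_const v)]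
    simp
  have comp' : ∀ v : Fin d → ℝ, ∀ y,
      pd j (fun z => fderiv ℝ f z v) y = fderiv ℝ (fderiv ℝ f) y (Pi.single j 1) v := by
    intro v y
    have hd : DifferentiableAt ℝ (fun z => fderiv ℝ f z v) y :=
      (hfd2 y).clm_apply (differentiableAt_const v)
    rw [pd_eq hd j, fderiv_clm_apply (hfd2 y) (differentiableAt_const v)]
    simp
  rw [pd_eq_fun hfd j, pd_eq_fun hfd k, comp _ x, comp' _ x, key]

lemma lip_of {f : (Fin d → ℝ) → F} (hf : ContDiff ℝ (⊤ : ℕ∞) f)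
    (hs : HasCompactSupport f) : ∃ C : NNReal, LipschitzWith C f :=
  ContDiff.lipschitzWith_of_hasCompactSupport hs hf (by simp)

lemma ibp {f g : (Fin d → ℝ) → ℝ} {C D : NNReal}
    (hfl : LipschitzWith C f) (hfd : Differentiable ℝ f)
    (hgl : LipschitzWith D g) (hgd : Differentiable ℝ g)
    (hgs : HasCompactSupport g) (j : Fin d) :
    ∫ x : Fin d → ℝ, pd j f x * g x = -∫ x : Fin d → ℝ, f x * pd j g x := by
  have h := hfl.integral_lineDeriv_mul_eq (μ := (volume : Measure (Fin d → ℝ)))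
    hgl hgs (Pi.single j 1)
  have e1 : ∀ x, lineDeriv ℝ f x (Pi.single j 1) = pd j f x := fun x => by
    rw [(hfd x).lineDeriv_eq_fderiv, pd_eq (hfd x) j]
  have e2 : ∀ x, lineDeriv ℝ g x (-Pi.single j 1) = -pd j g x := fun x => by
    rw [(hgd x).lineDeriv_eq_fderiv, map_neg, pd_eq (hgd x) j]
  simp_rw [e1, e2, neg_mul] at h
  rw [h, integral_neg]
  congr 1
  exact integral_congr_ae (Filter.Eventually.of_forall fun x => mul_comm _ _)


lemma hcs_mul {g f : (Fin d → ℝ) → ℝ} (hf : HasCompactSupport f) :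
    HasCompactSupport (fun x => g x * f x) := hf.mul_left

lemma hcs_mul' {g f : (Fin d → ℝ) → ℝ} (hf : HasCompactSupport f) :
    HasCompactSupport (fun x => f x * g x) := hf.mul_right

lemma integrable_cs {f : (Fin d → ℝ) → ℝ} (hc : Continuous f) (hs : HasCompactSupport f) :
    Integrable f (volume : Measure (Fin d → ℝ)) :=
  hc.integrable_of_hasCompactSupport hs

lemma proj_lip (j : Fin d) : ∃ C : NNReal, LipschitzWith C (fun y : Fin d → ℝ => y j) :=
  ⟨_, (ContinuousLinearMap.proj (R := ℝ) (φ := fun _ : Fin d => ℝ) j).lipschitz⟩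

lemma proj_diff (j : Fin d) : Differentiable ℝ (fun y : Fin d → ℝ => y j) :=
  (ContinuousLinearMap.proj (R := ℝ) (φ := fun _ : Fin d => ℝ) j).differentiable

lemma proj_contDiff (j : Fin d) : ContDiff ℝ (⊤ : ℕ∞) (fun y : Fin d → ℝ => y j) :=
  (ContinuousLinearMap.proj (R := ℝ) (φ := fun _ : Fin d => ℝ) j).contDiff

lemma star (f : (Fin d → ℝ) → ℝ) (hf : ContDiff ℝ (⊤ : ℕ∞) f) (hs : HasCompactSupport f) :
    -∫ x : Fin d → ℝ, (∑ k : Fin d, pd k (pd k f) x)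
        * ((d / 2 : ℝ) * f x + ∑ j : Fin d, x j * pd j f x)
      = ∫ x : Fin d → ℝ, ∑ k : Fin d, pd k f x ^ 2 := by
  have top1 : ((⊤ : ℕ∞) : WithTop ℕ∞) ≠ 0 := by simp
  have hfd : Differentiable ℝ f := hf.differentiable top1
  have hFc : ∀ k : Fin d, ContDiff ℝ (⊤ : ℕ∞) (pd k f) := fun k => cont_pd hf k
  have hFd : ∀ k, Differentiable ℝ (pd k f) := fun k => (hFc k).differentiable top1
  have hFs : ∀ k, HasCompactSupport (pd k f) := fun k => supp_pd hfd hs k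
  have hGc : ∀ k : Fin d, ContDiff ℝ (⊤ : ℕ∞) (pd k (pd k f)) := fun k => cont_pd (hFc k) k
  have hGd : ∀ k, Differentiable ℝ (pd k (pd k f)) := fun k => (hGc k).differentiable top1
  have hGs : ∀ k, HasCompactSupport (pd k (pd k f)) := fun k => supp_pd (hFd k) (hFs k) k
  obtain ⟨Cf, hCf⟩ := lip_of hf hs
  set Q : Fin d → ℝ := fun k => ∫ x : Fin d → ℝ, pd k f x ^ 2 with hQ
  -- Claim A : ∫ ∂ₖ∂ₖf · f = -Q k
  have claimA : ∀ k, ∫ x : Fin d → ℝ, pd k (pd k f) x * f x = -Q k := by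
    intro k
    obtain ⟨C, hC⟩ := lip_of (hFc k) (hFs k)
    rw [ibp hC (hFd k) hCf hfd hs k, hQ]
    rw [show (∫ x : Fin d → ℝ, pd k f x * pd k f x)
        = ∫ x : Fin d → ℝ, pd k f x ^ 2 from
      integral_congr_ae (Filter.Eventually.of_forall fun x => by ring)]
  -- Claim C : ∫ xⱼ (∂ₖf · ∂ⱼ∂ₖf) = -Q k / 2
  have claimC : ∀ k j, ∫ x : Fin d → ℝ, x j * (pd k f x * pd j (pd k f) x)
      = -(1 / 2) * Q k := by
    intro k j
    have hHc : ContDiff ℝ (⊤ : ℕ∞) (fun x => pd k f x * pd k f x) := (hFc k).mul (hFc k)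
    have hHd : Differentiable ℝ (fun x => pd k f x * pd k f x) := hHc.differentiable top1
    have hHs : HasCompactSupport (fun x => pd k f x * pd k f x) := hcs_mul (hFs k)
    obtain ⟨D, hD⟩ := lip_of hHc hHs
    obtain ⟨Cp, hCp⟩ := proj_lip (d := d) j
    have h := ibp hCp (proj_diff j) hD hHd hHs j
    have e1 : ∀ x : Fin d → ℝ, pd j (fun y : Fin d → ℝ => y j) x * (pd k f x * pd k f x)
        = pd k f x ^ 2 := by
      intro x
      rw [pd_proj j j x, if_pos rfl]
      ring
    have e2 : ∀ x : Fin d → ℝ, x j * pd j (fun y => pd k f y * pd k f y) x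
        = 2 * (x j * (pd k f x * pd j (pd k f) x)) := by
      intro x
      rw [pd_mul (hFd k x) (hFd k x) j]
      ring
    simp_rw [e1, e2] at h
    rw [integral_const_mul] at h
    have hQk : (∫ x : Fin d → ℝ, pd k f x ^ 2) = Q k := rfl
    rw [hQk] at h
    linarith
  -- Claim B : ∫ ∂ₖ∂ₖf · (xⱼ ∂ⱼf) = -(δⱼₖ) Q k + Q k / 2
  have claimB : ∀ k j, ∫ x : Fin d → ℝ, pd k (pd k f) x * (x j * pd j f x)
      = -(if j = k then Q k else 0) + (1 / 2) * Q k := by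
    intro k j
    have hGc' : ContDiff ℝ (⊤ : ℕ∞) (fun x : Fin d → ℝ => x j * pd j f x) :=
      (proj_contDiff j).mul (hFc j)
    have hGd' : Differentiable ℝ (fun x : Fin d → ℝ => x j * pd j f x) :=
      hGc'.differentiable top1
    have hGs' : HasCompactSupport (fun x : Fin d → ℝ => x j * pd j f x) := hcs_mul (hFs j)
    obtain ⟨D, hD⟩ := lip_of hGc' hGs'
    obtain ⟨C, hC⟩ := lip_of (hFc k) (hFs k)
    have h := ibp hC (hFd k) hD hGd' hGs' k
    have e1 : ∀ x : Fin d → ℝ, pd k f x * pd k (fun y => y j * pd j f y) x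
        = (if j = k then pd k f x * pd j f x else 0)
          + x j * (pd k f x * pd j (pd k f) x) := by
      intro x
      rw [pd_mul (proj_diff j x) (hFd j x) k, pd_proj j k x, pd_comm hf j k x]
      by_cases hjk : j = k <;> simp [hjk] <;> ring
    simp_rw [e1] at h
    have int1 : Integrable (fun x : Fin d → ℝ =>
        if j = k then pd k f x * pd j f x else 0) (volume : Measure (Fin d → ℝ)) := by
      by_cases hjk : j = k
      · subst hjk
        simp only [if_true]
        exact integrable_cs (((hFc j).continuous).mul ((hFc j).continuous))
          (hcs_mul (hFs j))
      · simp only [hjk, if_false]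
        exact integrable_zero _ _ _
    have int2 : Integrable (fun x : Fin d → ℝ =>
        x j * (pd k f x * pd j (pd k f) x)) (volume : Measure (Fin d → ℝ)) := by
      refine integrable_cs ?_ ?_
      · exact (continuous_apply j).mul (((hFc k).continuous).mul
          ((cont_pd (hFc k) j).continuous))
      · exact hcs_mul (hcs_mul (supp_pd (hFd k) (hFs k) j))
    rw [integral_add int1 int2, claimC k j] at h
    rw [h]
    have : (∫ x : Fin d → ℝ, if j = k then pd k f x * pd j f x else 0)
        = if j = k then Q k else 0 := by
      by_cases hjk : j = k
      · subst hjk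
        simp only [if_true, hQ]
        exact integral_congr_ae (Filter.Eventually.of_forall fun x => by ring)
      · simp [hjk]
    rw [this]
    ring
  -- continuity of the multiplier
  have hc_c : Continuous (fun x : Fin d → ℝ =>
      (d / 2 : ℝ) * f x + ∑ j : Fin d, x j * pd j f x) :=
    (continuous_const.mul hf.continuous).add
      (continuous_finset_sum _ fun j _ => (continuous_apply j).mul (hFc j).continuous)
  -- per-k identity
  have main : ∀ k, ∫ x : Fin d → ℝ, pd k (pd k f) x
      * ((d / 2 : ℝ) * f x + ∑ j : Fin d, x j * pd j f x) = -Q k := by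
    intro k
    have expand : ∀ x : Fin d → ℝ, pd k (pd k f) x
        * ((d / 2 : ℝ) * f x + ∑ j : Fin d, x j * pd j f x)
        = (d / 2 : ℝ) * (pd k (pd k f) x * f x)
          + ∑ j : Fin d, pd k (pd k f) x * (x j * pd j f x) := by
      intro x
      rw [mul_add, Finset.mul_sum]
      congr 1
      ring
    rw [integral_congr_ae (Filter.Eventually.of_forall expand)]
    have intA : Integrable (fun x : Fin d → ℝ =>
        (d / 2 : ℝ) * (pd k (pd k f) x * f x)) (volume : Measure (Fin d → ℝ)) := by
      apply Integrable.const_mul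
      exact integrable_cs ((hGc k).continuous.mul hf.continuous) (hcs_mul hs)
    have intB : ∀ j : Fin d, Integrable (fun x : Fin d → ℝ =>
        pd k (pd k f) x * (x j * pd j f x)) (volume : Measure (Fin d → ℝ)) := by
      intro j
      refine integrable_cs ?_ ?_
      · exact (hGc k).continuous.mul ((continuous_apply j).mul (hFc j).continuous)
      · exact hcs_mul (hcs_mul (hFs j))
    rw [integral_add intA (integrable_finset_sum _ fun j _ => intB j),
      integral_const_mul, claimA k,
      integral_finset_sum _ fun j _ => intB j]
    have : ∑ j : Fin d, (∫ x : Fin d → ℝ, pd k (pd k f) x * (x j * pd j f x))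
        = ∑ j : Fin d, (-(if j = k then Q k else 0) + (1 / 2) * Q k) :=
      Finset.sum_congr rfl fun j _ => claimB k j
    rw [this, Finset.sum_add_distrib]
    rw [Finset.sum_neg_distrib]
    rw [Finset.sum_ite_eq' Finset.univ k fun _ => Q k]
    simp only [Finset.mem_univ, if_true, Finset.sum_const, Finset.card_univ,
      Fintype.card_fin, nsmul_eq_mul]
    ring
  -- assemble
  have expand2 : ∀ x : Fin d → ℝ, (∑ k : Fin d, pd k (pd k f) x)
      * ((d / 2 : ℝ) * f x + ∑ j : Fin d, x j * pd j f x)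
      = ∑ k : Fin d, pd k (pd k f) x
          * ((d / 2 : ℝ) * f x + ∑ j : Fin d, x j * pd j f x) := by
    intro x
    rw [Finset.sum_mul]
  have intk : ∀ k : Fin d, Integrable (fun x : Fin d → ℝ => pd k (pd k f) x
      * ((d / 2 : ℝ) * f x + ∑ j : Fin d, x j * pd j f x))
      (volume : Measure (Fin d → ℝ)) := by
    intro k
    refine integrable_cs ((hGc k).continuous.mul hc_c) ?_
    exact hcs_mul' (hGs k)
  have intsq : ∀ k : Fin d, Integrable (fun x : Fin d → ℝ => pd k f x ^ 2)
      (volume : Measure (Fin d → ℝ)) := by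
    intro k
    refine integrable_cs (((hFc k).continuous).pow 2) ?_
    have : (fun x : Fin d → ℝ => pd k f x ^ 2) = fun x => pd k f x * pd k f x := by
      funext x; ring
    rw [this]
    exact hcs_mul (hFs k)
  rw [integral_congr_ae (Filter.Eventually.of_forall expand2),
    integral_finset_sum _ fun k _ => intk k,
    integral_finset_sum _ fun k _ => intsq k]
  simp only [main]
  simp
  rfl


lemma pd_re {u : (Fin d → ℝ) → ℂ} (hu : Differentiable ℝ u) (j : Fin d) (x : Fin d → ℝ) :
    pd j (fun y => (u y).re) x = (pd j u x).re := by
  have h := hasDerivAt_slice (hu x) j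
  have hre : HasDerivAt (fun s => (u (Function.update x j s)).re)
      ((fderiv ℝ u x (Pi.single j 1)).re) (x j) := by
    simpa [Function.comp_def] using (Complex.reCLM.hasFDerivAt.comp_hasDerivAt (x j) h)
  rw [pd_eq (hu x) j]
  exact hre.deriv

lemma pd_im {u : (Fin d → ℝ) → ℂ} (hu : Differentiable ℝ u) (j : Fin d) (x : Fin d → ℝ) :
    pd j (fun y => (u y).im) x = (pd j u x).im := by
  have h := hasDerivAt_slice (hu x) j
  have him : HasDerivAt (fun s => (u (Function.update x j s)).im)
      ((fderiv ℝ u x (Pi.single j 1)).im) (x j) := by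
    simpa [Function.comp_def] using (Complex.imCLM.hasFDerivAt.comp_hasDerivAt (x j) h)
  rw [pd_eq (hu x) j]
  exact him.deriv

lemma hcs_sum {ι : Type*} (s : Finset ι) (f : ι → (Fin d → ℝ) → F)
    (h : ∀ i ∈ s, HasCompactSupport (f i)) :
    HasCompactSupport (fun x => ∑ i ∈ s, f i x) := by
  classical
  induction s using Finset.induction with
  | empty =>
    simp only [Finset.sum_empty]
    have : (fun _ : Fin d → ℝ => (0 : F)) = 0 := rfl
    rw [this, HasCompactSupport]
    have h0 : tsupport (0 : (Fin d → ℝ) → F) = ∅ := by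
      simp [tsupport, Function.support_zero]
    rw [h0]
    exact isCompact_empty
  | @insert a s ha ih =>
    simp only [Finset.sum_insert ha]
    exact HasCompactSupport.add (h a (Finset.mem_insert_self a s))
      (ih fun i hi => h i (Finset.mem_insert_of_mem hi))

end Aux

lemma pdXs_eq_pd {d : ℕ} (j : Fin d) (u : (Fin d → ℝ) → ℂ) : pdXs j u = pd j u := rfl

/-- Pohozaev identity:
`-Re ∫ Δu · conj((d/2) u + ∑_j x_j ∂_j u) = ∫ ∑_j |∂_j u|²`. -/
theorem stmt13 (d : ℕ) (hd : 1 ≤ d) (u : (Fin d → ℝ) → ℂ)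
    (hsmooth : ContDiff ℝ (⊤ : ℕ∞) u) (hsupp : HasCompactSupport u) :
    -(∫ x : Fin d → ℝ, (∑ j : Fin d, pdXs j (pdXs j u) x)
        * (starRingEnd ℂ) ((d : ℂ) / 2 * u x + ∑ j : Fin d, (x j : ℂ) * pdXs j u x)).re
      = ∫ x : Fin d → ℝ, ∑ j : Fin d, ‖pdXs j u x‖ ^ 2 := by

  have top1 : ((⊤ : ℕ∞) : WithTop ℕ∞) ≠ 0 := by simp
  have hud : Differentiable ℝ u := hsmooth.differentiable top1
  set A : (Fin d → ℝ) → ℝ := fun x => (u x).re with hA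
  set B : (Fin d → ℝ) → ℝ := fun x => (u x).im with hB
  have hAc : ContDiff ℝ (⊤ : ℕ∞) A := Complex.reCLM.contDiff.comp hsmooth
  have hBc : ContDiff ℝ (⊤ : ℕ∞) B := Complex.imCLM.contDiff.comp hsmooth
  have hAs : HasCompactSupport A := hsupp.comp_left (g := Complex.re) rfl
  have hBs : HasCompactSupport B := hsupp.comp_left (g := Complex.im) rfl
  -- smoothness and support of the complex partials
  have hpuc : ∀ k : Fin d, ContDiff ℝ (⊤ : ℕ∞) (pdXs k u) := by
    intro k; rw [pdXs_eq_pd]; exact cont_pd hsmooth k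
  have hpud : ∀ k : Fin d, Differentiable ℝ (pdXs k u) := fun k => (hpuc k).differentiable top1
  have hpus : ∀ k : Fin d, HasCompactSupport (pdXs k u) := by
    intro k; rw [pdXs_eq_pd]; exact supp_pd hud hsupp k
  have hppuc : ∀ k : Fin d, ContDiff ℝ (⊤ : ℕ∞) (pdXs k (pdXs k u)) := by
    intro k; rw [pdXs_eq_pd]; exact cont_pd (hpuc k) k
  have hppus : ∀ k : Fin d, HasCompactSupport (pdXs k (pdXs k u)) := by
    intro k; rw [pdXs_eq_pd (u := pdXs k u)]; exact supp_pd (hpud k) (hpus k) k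
  -- first-level real/imaginary parts
  have hre1 : ∀ j : Fin d, (fun x => (pdXs j u x).re) = pd j A := by
    intro j
    funext x
    exact (pd_re hud j x).symm
  have him1 : ∀ j : Fin d, (fun x => (pdXs j u x).im) = pd j B := by
    intro j
    funext x
    exact (pd_im hud j x).symm
  -- second-level
  have hre2 : ∀ (k : Fin d) (x : Fin d → ℝ), (pdXs k (pdXs k u) x).re = pd k (pd k A) x := by
    intro k x
    have h1 : (pdXs k (pdXs k u) x).re = pd k (fun y => (pdXs k u y).re) x :=
      (pd_re (u := pdXs k u) (by rw [pdXs_eq_pd] at *; exact hpud k) k x).symm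
    rw [h1, hre1 k]
  have him2 : ∀ (k : Fin d) (x : Fin d → ℝ), (pdXs k (pdXs k u) x).im = pd k (pd k B) x := by
    intro k x
    have h1 : (pdXs k (pdXs k u) x).im = pd k (fun y => (pdXs k u y).im) x :=
      (pd_im (u := pdXs k u) (by rw [pdXs_eq_pd] at *; exact hpud k) k x).symm
    rw [h1, him1 k]
  -- pointwise identity for the left integrand
  have hpoint : ∀ x : Fin d → ℝ,
      ((∑ j : Fin d, pdXs j (pdXs j u) x)
        * (starRingEnd ℂ) ((d : ℂ) / 2 * u x + ∑ j : Fin d, (x j : ℂ) * pdXs j u x)).re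
      = (∑ k : Fin d, pd k (pd k A) x)
          * ((d / 2 : ℝ) * A x + ∑ j : Fin d, x j * pd j A x)
        + (∑ k : Fin d, pd k (pd k B) x)
          * ((d / 2 : ℝ) * B x + ∑ j : Fin d, x j * pd j B x) := by
    intro x
    have z_re : (∑ j : Fin d, pdXs j (pdXs j u) x).re = ∑ k : Fin d, pd k (pd k A) x := by
      rw [Complex.re_sum]
      exact Finset.sum_congr rfl fun k _ => hre2 k x
    have z_im : (∑ j : Fin d, pdXs j (pdXs j u) x).im = ∑ k : Fin d, pd k (pd k B) x := by
      rw [Complex.im_sum]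
      exact Finset.sum_congr rfl fun k _ => him2 k x
    have hd2 : ((d : ℂ) / 2) = (((d : ℝ) / 2 : ℝ) : ℂ) := by push_cast; ring
    have w_re : ((d : ℂ) / 2 * u x + ∑ j : Fin d, (x j : ℂ) * pdXs j u x).re
        = (d / 2 : ℝ) * A x + ∑ j : Fin d, x j * pd j A x := by
      rw [Complex.add_re, Complex.re_sum, hd2]
      congr 1
      · rw [Complex.mul_re]
        simp [hA]
      · refine Finset.sum_congr rfl fun j _ => ?_
        rw [Complex.mul_re]
        simp [← hre1 j]
    have w_im : ((d : ℂ) / 2 * u x + ∑ j : Fin d, (x j : ℂ) * pdXs j u x).im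
        = (d / 2 : ℝ) * B x + ∑ j : Fin d, x j * pd j B x := by
      rw [Complex.add_im, Complex.im_sum, hd2]
      congr 1
      · rw [Complex.mul_im]
        simp [hB]
      · refine Finset.sum_congr rfl fun j _ => ?_
        rw [Complex.mul_im]
        simp [← him1 j]
    rw [Complex.mul_re, Complex.conj_re, Complex.conj_im, z_re, z_im, w_re, w_im]
    ring
  -- integrability of the complex integrand
  have hWc : Continuous (fun x : Fin d → ℝ =>
      (d : ℂ) / 2 * u x + ∑ j : Fin d, (x j : ℂ) * pdXs j u x) := by
    refine (continuous_const.mul hsmooth.continuous).add ?_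
    refine continuous_finset_sum _ fun j _ => ?_
    exact (Complex.continuous_ofReal.comp (continuous_apply j)).mul (hpuc j).continuous
  have hZc : Continuous (fun x : Fin d → ℝ => ∑ j : Fin d, pdXs j (pdXs j u) x) :=
    continuous_finset_sum _ fun j _ => (hppuc j).continuous
  have hZs : HasCompactSupport (fun x : Fin d → ℝ => ∑ j : Fin d, pdXs j (pdXs j u) x) :=
    hcs_sum Finset.univ _ fun j _ => hppus j
  have hint : Integrable (fun x : Fin d → ℝ => (∑ j : Fin d, pdXs j (pdXs j u) x)
      * (starRingEnd ℂ) ((d : ℂ) / 2 * u x + ∑ j : Fin d, (x j : ℂ) * pdXs j u x))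
      (volume : Measure (Fin d → ℝ)) := by
    refine Continuous.integrable_of_hasCompactSupport ?_ ?_
    · exact hZc.mul (RCLike.continuous_conj.comp hWc)
    · exact hZs.mul_right
  -- move `.re` inside the integral
  have hre_int := integral_re (μ := (volume : Measure (Fin d → ℝ))) hint
  simp only [RCLike.re_to_complex] at hre_int
  rw [← hre_int]
  rw [integral_congr_ae (Filter.Eventually.of_forall hpoint)]
  -- integrability of the two real pieces
  have top1' := top1
  have intIA : Integrable (fun x : Fin d → ℝ => (∑ k : Fin d, pd k (pd k A) x)
      * ((d / 2 : ℝ) * A x + ∑ j : Fin d, x j * pd j A x))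
      (volume : Measure (Fin d → ℝ)) := by
    refine Continuous.integrable_of_hasCompactSupport ?_ ?_
    · refine (continuous_finset_sum _ fun k _ => (cont_pd (cont_pd hAc k) k).continuous).mul ?_
      exact (continuous_const.mul hAc.continuous).add
        (continuous_finset_sum _ fun j _ => (continuous_apply j).mul (cont_pd hAc j).continuous)
    · refine HasCompactSupport.mul_right ?_
      have : ∀ k : Fin d, HasCompactSupport (fun x : Fin d → ℝ => pd k (pd k A) x) := by
        intro k
        exact supp_pd ((cont_pd hAc k).differentiable top1)
          (supp_pd (hAc.differentiable top1) hAs k) k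
      exact hcs_sum Finset.univ _ fun k _ => this k
  have intIB : Integrable (fun x : Fin d → ℝ => (∑ k : Fin d, pd k (pd k B) x)
      * ((d / 2 : ℝ) * B x + ∑ j : Fin d, x j * pd j B x))
      (volume : Measure (Fin d → ℝ)) := by
    refine Continuous.integrable_of_hasCompactSupport ?_ ?_
    · refine (continuous_finset_sum _ fun k _ => (cont_pd (cont_pd hBc k) k).continuous).mul ?_
      exact (continuous_const.mul hBc.continuous).add
        (continuous_finset_sum _ fun j _ => (continuous_apply j).mul (cont_pd hBc j).continuous)
    · refine HasCompactSupport.mul_right ?_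
      have : ∀ k : Fin d, HasCompactSupport (fun x : Fin d → ℝ => pd k (pd k B) x) := by
        intro k
        exact supp_pd ((cont_pd hBc k).differentiable top1)
          (supp_pd (hBc.differentiable top1) hBs k) k
      exact hcs_sum Finset.univ _ fun k _ => this k
  rw [integral_add intIA intIB, neg_add, star A hAc hAs, star B hBc hBs]
  -- right-hand side
  have intQA : Integrable (fun x : Fin d → ℝ => ∑ k : Fin d, pd k A x ^ 2)
      (volume : Measure (Fin d → ℝ)) := by
    refine integrable_finset_sum _ fun k _ => ?_
    refine integrable_cs ((cont_pd hAc k).continuous.pow 2) ?_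
    have : (fun x : Fin d → ℝ => pd k A x ^ 2) = fun x => pd k A x * pd k A x := by
      funext x; ring
    rw [this]
    exact hcs_mul (supp_pd (hAc.differentiable top1) hAs k)
  have intQB : Integrable (fun x : Fin d → ℝ => ∑ k : Fin d, pd k B x ^ 2)
      (volume : Measure (Fin d → ℝ)) := by
    refine integrable_finset_sum _ fun k _ => ?_
    refine integrable_cs ((cont_pd hBc k).continuous.pow 2) ?_
    have : (fun x : Fin d → ℝ => pd k B x ^ 2) = fun x => pd k B x * pd k B x := by
      funext x; ring
    rw [this]
    exact hcs_mul (supp_pd (hBc.differentiable top1) hBs k)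
  rw [← integral_add intQA intQB]
  refine integral_congr_ae (Filter.Eventually.of_forall fun x => ?_)
  show (∑ k : Fin d, pd k A x ^ 2) + (∑ k : Fin d, pd k B x ^ 2)
      = ∑ j : Fin d, ‖pdXs j u x‖ ^ 2
  rw [← Finset.sum_add_distrib]
  refine (Finset.sum_congr rfl fun j _ => ?_).symm
  rw [Complex.sq_norm, Complex.normSq_apply, ← hre1 j, ← him1 j]
  ring
end

section
/- (Vanishing of the Ornstein–Uhlenbeck contribution to the partial virial identity) Let d ≥ 1 and let u : ℝ^d × ℝ → ℂ, written u = u(x,α), be infinitely differentiable with compact support. Then Re ∫_{ℝ^d×ℝ} ∂_α( e^{−α²/2}·∂_α u )·conj( (d/2)·u + ∑_{j=1}^d x_j·∂_{x_j}u ) dx dα = 0. -/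
open MeasureTheory

noncomputable section

/-- Partial derivative in the `j`-th Euclidean variable for a function on `ℝ^d × ℝ`. -/
def pdX2 {d : ℕ} (j : Fin d) (u : (Fin d → ℝ) → ℝ → ℂ) : (Fin d → ℝ) → ℝ → ℂ :=
  fun x α => deriv (fun s => u (Function.update x j s) α) (x j)

/-- Partial derivative in the Ornstein–Uhlenbeck variable `α`. -/
def pdA2 {d : ℕ} (u : (Fin d → ℝ) → ℝ → ℂ) : (Fin d → ℝ) → ℝ → ℂ :=
  fun x α => deriv (fun s => u x s) α

end

section AuxClairaut
open MeasureTheory Function Set ComplexConjugate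

open MeasureTheory Function Set

section IBP

lemma key1d {f : ℝ → ℂ} (hf : ContDiff ℝ 1 f) (h2 : HasCompactSupport f) :
    ∫ s : ℝ, deriv f s = 0 := by
  have hint : Integrable (deriv f) :=
    (hf.continuous_deriv le_rfl).integrable_of_hasCompactSupport (h2.deriv (𝕜 := ℝ))
  rw [← intervalIntegral.integral_Iic_add_Ioi (b := (0:ℝ)) hint.integrableOn hint.integrableOn,
    h2.integral_Iic_deriv_eq hf, h2.integral_Ioi_deriv_eq hf]
  ring

variable {d : ℕ}

lemma keyPi (j : Fin d) {G : (Fin d → ℝ) → ℂ} (hG : ContDiff ℝ 1 G)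
    (h2 : HasCompactSupport G) :
    ∫ x : Fin d → ℝ, fderiv ℝ G x (Pi.single j 1) = 0 := by
  classical
  obtain ⟨n, rfl⟩ : ∃ n, d = n + 1 :=
    ⟨d - 1, (Nat.succ_pred_eq_of_pos j.pos).symm⟩
  obtain ⟨R, hR⟩ := (Metric.isBounded_iff_subset_closedBall 0).1 h2.isBounded
  set a : Fin (n+1) → ℝ := fun _ => -(|R| + 1) with ha
  set b : Fin (n+1) → ℝ := fun _ => |R| + 1 with hb
  have hcoord : ∀ y ∈ tsupport G, ∀ i, |y i| ≤ |R| := by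
    intro y hy i
    have h1 : ‖y‖ ≤ R := by simpa [dist_zero_right] using hR hy
    calc |y i| = ‖y i‖ := (Real.norm_eq_abs _).symm
    _ ≤ ‖y‖ := norm_le_pi_norm y i
    _ ≤ R := h1
    _ ≤ |R| := le_abs_self R
  have hsub : tsupport G ⊆ Icc a b := by
    intro y hy
    rw [Set.mem_Icc]
    constructor <;> intro i
    · have := (abs_le.1 (hcoord y hy i)).1; simp only [ha]; linarith
    · have := (abs_le.1 (hcoord y hy i)).2; simp only [hb]; linarith
  have hle : a ≤ b := fun i => by
    simp only [ha, hb]; have := abs_nonneg R; linarith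
  set f : Fin (n+1) → (Fin (n+1) → ℝ) → ℂ := fun i x => if i = j then G x else 0 with hf
  set f' : Fin (n+1) → (Fin (n+1) → ℝ) → (Fin (n+1) → ℝ) →L[ℝ] ℂ :=
    fun i x => if i = j then fderiv ℝ G x else 0 with hf'
  have Hc : ∀ i, ContinuousOn (f i) (Icc a b) := by
    intro i
    by_cases h : i = j
    · simpa [hf, h] using hG.continuous.continuousOn
    · simp only [hf, h, if_false]; exact continuousOn_const
  have Hd : ∀ x ∈ (Set.pi univ fun i => Ioo (a i) (b i)) \ (∅ : Set (Fin (n+1) → ℝ)),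
      ∀ i, HasFDerivAt (f i) (f' i x) x := by
    intro x _ i
    by_cases h : i = j
    · simpa [hf, hf', h] using (hG.differentiable one_ne_zero x).hasFDerivAt
    · simp only [hf, hf', h, if_false]; exact hasFDerivAt_const 0 x
  have hdiv : ∀ x : Fin (n+1) → ℝ,
      (∑ i, f' i x (Pi.single i 1)) = fderiv ℝ G x (Pi.single j 1) := by
    intro x
    rw [Finset.sum_eq_single j]
    · simp [hf']
    · intro i _ hij; simp [hf', hij]
    · intro h; exact absurd (Finset.mem_univ j) h
  have Hi : IntegrableOn (fun x => ∑ i, f' i x (Pi.single i 1)) (Icc a b) := by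
    simp only [hdiv]
    exact ((hG.continuous_fderiv one_ne_zero).clm_apply continuous_const).continuousOn.integrableOn_compact
      isCompact_Icc
  have hmain := MeasureTheory.integral_divergence_of_hasFDerivAt_off_countable' a b hle
    f f' ∅ countable_empty Hc Hd Hi
  have hfaces : ∀ i : Fin (n+1),
      ((∫ x in Icc (a ∘ Fin.succAbove i) (b ∘ Fin.succAbove i), f i (Fin.insertNth i (b i) x)) -
        ∫ x in Icc (a ∘ Fin.succAbove i) (b ∘ Fin.succAbove i), f i (Fin.insertNth i (a i) x)) = 0 := by
    intro i
    by_cases h : i = j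
    · subst h
      have hfront : ∀ x : Fin n → ℝ, G (Fin.insertNth i (b i) x) = 0 := by
        intro x
        by_contra hGx
        have := hcoord _ (subset_tsupport G hGx) i
        rw [Fin.insertNth_apply_same] at this
        simp only [hb] at this
        rw [abs_of_nonneg (by positivity)] at this
        linarith
      have hback : ∀ x : Fin n → ℝ, G (Fin.insertNth i (a i) x) = 0 := by
        intro x
        by_contra hGx
        have := hcoord _ (subset_tsupport G hGx) i
        rw [Fin.insertNth_apply_same] at this
        simp only [ha, abs_neg] at this
        rw [abs_of_nonneg (by positivity)] at this
        linarith
      simp [hf, hfront, hback]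
    · simp [hf, h]
  rw [Finset.sum_congr rfl (fun i _ => hfaces i), Finset.sum_const_zero] at hmain
  have hext : ∫ x in Icc a b, fderiv ℝ G x (Pi.single j 1)
      = ∫ x : Fin (n+1) → ℝ, fderiv ℝ G x (Pi.single j 1) := by
    apply setIntegral_eq_integral_of_forall_compl_eq_zero
    intro x hx
    have hxs : x ∉ tsupport G := fun h => hx (hsub h)
    have : fderiv ℝ G x = 0 := by
      by_contra h
      exact hxs (support_fderiv_subset ℝ (by simpa [Function.mem_support] using h))
    simp [this]
  rw [← hext, ← hmain]
  apply setIntegral_congr_fun measurableSet_Icc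
  intro x _
  exact (hdiv x).symm

lemma closedEmb_left (x : Fin d → ℝ) :
    Topology.IsClosedEmbedding (fun s : ℝ => ((x : Fin d → ℝ), s)) := by
  have hiso : Isometry (fun s : ℝ => ((x : Fin d → ℝ), s)) := by
    intro s t
    simp [Prod.edist_eq]
  exact hiso.isClosedEmbedding

lemma closedEmb_right (s : ℝ) :
    Topology.IsClosedEmbedding (fun x : Fin d → ℝ => (x, s)) := by
  have hiso : Isometry (fun x : Fin d → ℝ => (x, s)) := by
    intro y t
    simp [Prod.edist_eq]
  exact hiso.isClosedEmbedding

lemma keyA {F : (Fin d → ℝ) × ℝ → ℂ} (hF : ContDiff ℝ 1 F) (h2 : HasCompactSupport F) :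
    ∫ q : (Fin d → ℝ) × ℝ, fderiv ℝ F q (0, 1) = 0 := by
  have hdiff := hF.differentiable one_ne_zero
  have hcont : Continuous fun q => fderiv ℝ F q ((0 : Fin d → ℝ), (1:ℝ)) :=
    (hF.continuous_fderiv one_ne_zero).clm_apply continuous_const
  have hcs : HasCompactSupport fun q => fderiv ℝ F q ((0 : Fin d → ℝ), (1:ℝ)) :=
    (h2.fderiv (𝕜 := ℝ)).comp_left
      (g := fun L : ((Fin d → ℝ) × ℝ) →L[ℝ] ℂ => L ((0 : Fin d → ℝ), (1:ℝ))) rfl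
  have hint : Integrable _ (volume : Measure ((Fin d → ℝ) × ℝ)) := hcont.integrable_of_hasCompactSupport hcs
  rw [MeasureTheory.Measure.volume_eq_prod] at hint ⊢
  rw [MeasureTheory.integral_prod _ hint]
  have inner : ∀ x : Fin d → ℝ, (∫ s : ℝ, fderiv ℝ F (x, s) ((0 : Fin d → ℝ), (1:ℝ))) = 0 := by
    intro x
    have h1 : ∀ s : ℝ, fderiv ℝ F (x, s) ((0 : Fin d → ℝ), (1:ℝ)) = deriv (fun s => F (x, s)) s := by
      intro s
      have hc : HasDerivAt (fun s : ℝ => ((x : Fin d → ℝ), s)) ((0 : Fin d → ℝ), (1:ℝ)) s :=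
        (hasDerivAt_const s x).prodMk (hasDerivAt_id s)
      exact ((hdiff (x, s)).hasFDerivAt.comp_hasDerivAt s hc).deriv.symm
    simp only [h1]
    exact key1d (hF.comp ((contDiff_const (c := x)).prodMk contDiff_id))
      (h2.comp_isClosedEmbedding (closedEmb_left x))
  simp only [inner, integral_zero]

lemma keyX (j : Fin d) {F : (Fin d → ℝ) × ℝ → ℂ} (hF : ContDiff ℝ 1 F)
    (h2 : HasCompactSupport F) :
    ∫ q : (Fin d → ℝ) × ℝ, fderiv ℝ F q (Pi.single j 1, 0) = 0 := by
  have hdiff := hF.differentiable one_ne_zero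
  have hcont : Continuous fun q => fderiv ℝ F q ((Pi.single j 1 : Fin d → ℝ), (0:ℝ)) :=
    (hF.continuous_fderiv one_ne_zero).clm_apply continuous_const
  have hcs : HasCompactSupport fun q => fderiv ℝ F q ((Pi.single j 1 : Fin d → ℝ), (0:ℝ)) :=
    (h2.fderiv (𝕜 := ℝ)).comp_left
      (g := fun L : ((Fin d → ℝ) × ℝ) →L[ℝ] ℂ => L ((Pi.single j 1 : Fin d → ℝ), (0:ℝ))) rfl
  have hint : Integrable _ (volume : Measure ((Fin d → ℝ) × ℝ)) := hcont.integrable_of_hasCompactSupport hcs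
  rw [MeasureTheory.Measure.volume_eq_prod] at hint ⊢
  rw [MeasureTheory.integral_prod_symm _ hint]
  have inner : ∀ s : ℝ,
      (∫ x : Fin d → ℝ, fderiv ℝ F (x, s) ((Pi.single j 1 : Fin d → ℝ), (0:ℝ))) = 0 := by
    intro s
    have h1 : ∀ x : Fin d → ℝ, fderiv ℝ F (x, s) ((Pi.single j 1 : Fin d → ℝ), (0:ℝ))
        = fderiv ℝ (fun x => F (x, s)) x (Pi.single j 1) := by
      intro x
      have hc : HasFDerivAt (fun x : Fin d → ℝ => (x, s))
          (ContinuousLinearMap.inl ℝ (Fin d → ℝ) ℝ) x := hasFDerivAt_prodMk_left x s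
      have := ((hdiff (x, s)).hasFDerivAt.comp x hc).fderiv
      rw [show (fun x : Fin d → ℝ => F (x, s)) = F ∘ (fun x => (x, s)) from rfl, this]
      simp
    simp only [h1]
    exact keyPi j (hF.comp (contDiff_id.prodMk contDiff_const))
      (h2.comp_isClosedEmbedding (closedEmb_right s))
  simp only [inner, integral_zero]

end IBP

end AuxClairaut

section Aux2
open MeasureTheory Function Set ComplexConjugate

section PointwiseCalc
variable {E' : Type*} [NormedAddCommGroup E'] [NormedSpace ℝ E'] {q : E'}

lemma dd_mul {f g : E' → ℂ} (hf : DifferentiableAt ℝ f q)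
    (hg : DifferentiableAt ℝ g q) (w : E') :
    fderiv ℝ (fun p => f p * g p) q w = fderiv ℝ f q w * g q + f q * fderiv ℝ g q w := by
  rw [fderiv_fun_mul hf hg]
  simp only [ContinuousLinearMap.add_apply, ContinuousLinearMap.smul_apply, smul_eq_mul]
  ring

lemma dd_add {f g : E' → ℂ} (hf : DifferentiableAt ℝ f q)
    (hg : DifferentiableAt ℝ g q) (w : E') :
    fderiv ℝ (fun p => f p + g p) q w = fderiv ℝ f q w + fderiv ℝ g q w := by
  rw [fderiv_fun_add hf hg]; rfl

lemma dd_const_mul {f : E' → ℂ} (hf : DifferentiableAt ℝ f q) (c : ℂ) (w : E') :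
    fderiv ℝ (fun p => c * f p) q w = c * fderiv ℝ f q w := by
  rw [fderiv_const_mul hf c]; rfl

lemma dd_sum {ι : Type*} {s : Finset ι} {A : ι → E' → ℂ}
    (h : ∀ i ∈ s, DifferentiableAt ℝ (A i) q) (w : E') :
    fderiv ℝ (fun p => ∑ i ∈ s, A i p) q w = ∑ i ∈ s, fderiv ℝ (A i) q w := by
  rw [fderiv_fun_sum h]; simp

lemma dd_conj {f : E' → ℂ} (hf : DifferentiableAt ℝ f q) (w : E') :
    fderiv ℝ (fun p => conj (f p)) q w = conj (fderiv ℝ f q w) := by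
  have h := (Complex.conjCLE.hasFDerivAt.comp q hf.hasFDerivAt).fderiv
  rw [show (fun p => conj (f p)) = (Complex.conjCLE ∘ f) from rfl, h]
  simp

lemma dd_comm {f : E' → ℂ} (hf : ContDiff ℝ (⊤:ℕ∞) f) (q v w : E') :
    fderiv ℝ (fun p => fderiv ℝ f p v) q w = fderiv ℝ (fun p => fderiv ℝ f p w) q v := by
  have hd1 : Differentiable ℝ (fderiv ℝ f) :=
    (hf.fderiv_right (m := (⊤:ℕ∞)) (by norm_cast)).differentiable (by simp)
  have h1 : ∀ v' w' : E', fderiv ℝ (fun p => fderiv ℝ f p v') q w'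
      = fderiv ℝ (fderiv ℝ f) q w' v' := by
    intro v' w'
    rw [fderiv_clm_apply (hd1 q) (differentiableAt_const v')]
    simp
  rw [h1, h1]
  exact (hf.contDiffAt.isSymmSndFDerivAt
    (by simp only [minSmoothness_of_isRCLikeNormedField]; rw [show ((2 : WithTop ℕ∞)) = ((2:ℕ∞) : WithTop ℕ∞) from rfl]; exact_mod_cast le_top)).eq w v

lemma re_alg (r t : ℝ) (v s : ℂ) :
    ((r:ℂ) * v * conj ((t:ℂ) * s)).re
      = (1/2) * (((t:ℂ) * (r:ℂ) * (s * conj v + v * conj s)).re) := by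
  simp only [map_mul, Complex.conj_ofReal, Complex.mul_re, Complex.mul_im, Complex.add_re,
    Complex.add_im, Complex.conj_re, Complex.conj_im, Complex.ofReal_re, Complex.ofReal_im]
  ring

lemma re_alg2 (r c : ℝ) (v : ℂ) :
    ((r:ℂ) * v * conj ((c:ℂ) * v)).re = c * (((r:ℂ) * (v * conj v)).re) := by
  simp only [map_mul, Complex.conj_ofReal, Complex.mul_re, Complex.mul_im,
    Complex.conj_re, Complex.conj_im, Complex.ofReal_re, Complex.ofReal_im]
  ring

end PointwiseCalc

namespace Stmt14Aux

noncomputable def Wc {d : ℕ} (q : (Fin d → ℝ) × ℝ) : ℂ := ((Real.exp (-q.2 ^ 2 / 2) : ℝ) : ℂ)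

noncomputable def Vd {d : ℕ} (U : (Fin d → ℝ) × ℝ → ℂ) : (Fin d → ℝ) × ℝ → ℂ :=
  fun q => fderiv ℝ U q (0, 1)

noncomputable def Xd {d : ℕ} (U : (Fin d → ℝ) × ℝ → ℂ) (j : Fin d) : (Fin d → ℝ) × ℝ → ℂ :=
  fun q => fderiv ℝ U q (Pi.single j 1, 0)

noncomputable def Ad {d : ℕ} (U : (Fin d → ℝ) × ℝ → ℂ) : (Fin d → ℝ) × ℝ → ℂ :=
  fun q => (d:ℂ)/2 * U q + ∑ j, (q.1 j : ℂ) * Xd U j q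

noncomputable def Gd {d : ℕ} (U : (Fin d → ℝ) × ℝ → ℂ) : (Fin d → ℝ) × ℝ → ℂ :=
  fun q => Wc q * Vd U q

noncomputable def Φd {d : ℕ} (U : (Fin d → ℝ) × ℝ → ℂ) : (Fin d → ℝ) × ℝ → ℂ :=
  fun q => Wc q * Vd U q * conj (Ad U q)

noncomputable def Ψd {d : ℕ} (U : (Fin d → ℝ) × ℝ → ℂ) (j : Fin d) : (Fin d → ℝ) × ℝ → ℂ :=
  fun q => (q.1 j : ℂ) * Wc q * (Vd U q * conj (Vd U q))

variable {d : ℕ} {U : (Fin d → ℝ) × ℝ → ℂ}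

lemma contDiff_Wc : ContDiff ℝ (⊤:ℕ∞) (Wc (d := d)) :=
  Complex.ofRealCLM.contDiff.comp
    (Real.contDiff_exp.comp (((contDiff_snd (𝕜 := ℝ) (E := Fin d → ℝ) (F := ℝ)).pow 2).neg.div_const 2))

lemma contDiff_coord (j : Fin d) :
    ContDiff ℝ (⊤:ℕ∞) (fun q : (Fin d → ℝ) × ℝ => ((q.1 j : ℝ) : ℂ)) :=
  (Complex.ofRealCLM.comp
    ((ContinuousLinearMap.proj j).comp (ContinuousLinearMap.fst ℝ (Fin d → ℝ) ℝ))).contDiff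

lemma contDiff_conj {f : (Fin d → ℝ) × ℝ → ℂ} (hf : ContDiff ℝ (⊤:ℕ∞) f) :
    ContDiff ℝ (⊤:ℕ∞) (fun q => conj (f q)) :=
  Complex.conjCLE.toContinuousLinearMap.contDiff.comp hf

lemma htop1 : (1 : WithTop ℕ∞) ≤ ((⊤:ℕ∞) : WithTop ℕ∞) := by exact_mod_cast le_top

lemma htop0 : ((⊤:ℕ∞) : WithTop ℕ∞) ≠ 0 := by simp

lemma dd_coord (j : Fin d) (q w : (Fin d → ℝ) × ℝ) :
    fderiv ℝ (fun p : (Fin d → ℝ) × ℝ => ((p.1 j : ℝ) : ℂ)) q w = ((w.1 j : ℝ) : ℂ) := by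
  have h : (fun p : (Fin d → ℝ) × ℝ => ((p.1 j : ℝ) : ℂ))
      = (Complex.ofRealCLM.comp
          ((ContinuousLinearMap.proj j).comp (ContinuousLinearMap.fst ℝ (Fin d → ℝ) ℝ))) := rfl
  rw [h, ContinuousLinearMap.fderiv]
  rfl

lemma dd_Wc_eX (j : Fin d) (q : (Fin d → ℝ) × ℝ) :
    fderiv ℝ (Wc (d := d)) q ((Pi.single j 1 : Fin d → ℝ), (0:ℝ)) = 0 := by
  have hw0 : ContDiff ℝ (⊤:ℕ∞) (fun s : ℝ => ((Real.exp (-s ^ 2 / 2) : ℝ) : ℂ)) :=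
    Complex.ofRealCLM.contDiff.comp
      (Real.contDiff_exp.comp (((contDiff_id (𝕜 := ℝ) (E := ℝ)).pow 2).neg.div_const 2))
  have hc : HasFDerivAt (Wc (d := d))
      ((fderiv ℝ (fun s : ℝ => ((Real.exp (-s ^ 2 / 2) : ℝ) : ℂ)) q.2).comp
        (ContinuousLinearMap.snd ℝ (Fin d → ℝ) ℝ)) q :=
    ((hw0.differentiable htop0 q.2).hasFDerivAt).comp q
      (ContinuousLinearMap.snd ℝ (Fin d → ℝ) ℝ).hasFDerivAt
  rw [hc.fderiv]
  simp


section Support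

variable (hUs : HasCompactSupport U)
include hUs

lemma supp_Vd : HasCompactSupport (Vd U) :=
  (hUs.fderiv (𝕜 := ℝ)).comp_left
    (g := fun L : ((Fin d → ℝ) × ℝ) →L[ℝ] ℂ => L ((0 : Fin d → ℝ), (1:ℝ))) rfl

lemma supp_Gd : HasCompactSupport (Gd U) := (supp_Vd hUs).mul_left

lemma supp_Φd : HasCompactSupport (Φd U) := ((supp_Vd hUs).mul_left).mul_right

lemma supp_Ψd (j : Fin d) : HasCompactSupport (Ψd U j) :=
  ((supp_Vd hUs).mul_right).mul_left

end Support

section WithSmooth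

variable (hU : ContDiff ℝ (⊤:ℕ∞) U)
include hU

lemma contDiff_Vd : ContDiff ℝ (⊤:ℕ∞) (Vd U) :=
  (hU.fderiv_right (by norm_cast)).clm_apply contDiff_const

lemma contDiff_Xd (j : Fin d) : ContDiff ℝ (⊤:ℕ∞) (Xd U j) :=
  (hU.fderiv_right (by norm_cast)).clm_apply contDiff_const

lemma contDiff_Ad : ContDiff ℝ (⊤:ℕ∞) (Ad U) :=
  (contDiff_const.mul hU).add
    (ContDiff.sum fun j _ => (contDiff_coord j).mul (contDiff_Xd hU j))

lemma contDiff_Gd : ContDiff ℝ (⊤:ℕ∞) (Gd U) := contDiff_Wc.mul (contDiff_Vd hU)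

lemma contDiff_Φd : ContDiff ℝ (⊤:ℕ∞) (Φd U) :=
  (contDiff_Wc.mul (contDiff_Vd hU)).mul (contDiff_conj (contDiff_Ad hU))

lemma contDiff_Ψd (j : Fin d) : ContDiff ℝ (⊤:ℕ∞) (Ψd U j) :=
  ((contDiff_coord j).mul contDiff_Wc).mul
    ((contDiff_Vd hU).mul (contDiff_conj (contDiff_Vd hU)))

lemma dd_Ad_eA (q : (Fin d → ℝ) × ℝ) :
    fderiv ℝ (Ad U) q ((0 : Fin d → ℝ), (1:ℝ))
      = (d:ℂ)/2 * Vd U q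
        + ∑ j, (q.1 j : ℂ) * fderiv ℝ (Vd U) q ((Pi.single j 1 : Fin d → ℝ), (0:ℝ)) := by
  have hUd : Differentiable ℝ U := hU.differentiable htop0
  have hXd : ∀ j : Fin d, DifferentiableAt ℝ (Xd U j) q :=
    fun j => ((contDiff_Xd hU j).differentiable htop0) q
  have hco : ∀ j : Fin d, DifferentiableAt ℝ (fun p : (Fin d → ℝ) × ℝ => ((p.1 j : ℝ) : ℂ)) q :=
    fun j => ((contDiff_coord j).differentiable htop0) q
  have hterm : ∀ j : Fin d,
      DifferentiableAt ℝ (fun p : (Fin d → ℝ) × ℝ => ((p.1 j : ℝ):ℂ) * Xd U j p) q :=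
    fun j => (hco j).mul (hXd j)
  have h0 : DifferentiableAt ℝ (fun p : (Fin d → ℝ) × ℝ => (d:ℂ)/2 * U p) q :=
    (hUd q).const_mul _
  have h1 : DifferentiableAt ℝ
      (fun p : (Fin d → ℝ) × ℝ => ∑ j, ((p.1 j : ℝ):ℂ) * Xd U j p) q :=
    DifferentiableAt.fun_sum fun j _ => hterm j
  refine (dd_add h0 h1 _).trans ?_
  have e1 : fderiv ℝ (fun p : (Fin d → ℝ) × ℝ => (d:ℂ)/2 * U p) q ((0 : Fin d → ℝ), (1:ℝ))
      = (d:ℂ)/2 * Vd U q := (dd_const_mul (hUd q) _ _)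
  have e2 : fderiv ℝ (fun p : (Fin d → ℝ) × ℝ => ∑ j, ((p.1 j : ℝ):ℂ) * Xd U j p) q
        ((0 : Fin d → ℝ), (1:ℝ))
      = ∑ j, (q.1 j : ℂ) * fderiv ℝ (Vd U) q ((Pi.single j 1 : Fin d → ℝ), (0:ℝ)) := by
    refine (dd_sum (fun j _ => hterm j) _).trans ?_
    refine Finset.sum_congr rfl fun j _ => ?_
    refine (dd_mul (hco j) (hXd j) _).trans ?_
    rw [dd_coord]
    have hcomm : fderiv ℝ (Xd U j) q ((0 : Fin d → ℝ), (1:ℝ))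
        = fderiv ℝ (Vd U) q ((Pi.single j 1 : Fin d → ℝ), (0:ℝ)) :=
      dd_comm hU q ((Pi.single j 1 : Fin d → ℝ), (0:ℝ)) ((0 : Fin d → ℝ), (1:ℝ))
    rw [hcomm]
    simp
  rw [e1, e2]

lemma dd_Φd_eA (q : (Fin d → ℝ) × ℝ) :
    fderiv ℝ (Φd U) q ((0 : Fin d → ℝ), (1:ℝ))
      = fderiv ℝ (Gd U) q ((0 : Fin d → ℝ), (1:ℝ)) * conj (Ad U q)
        + Gd U q * conj (fderiv ℝ (Ad U) q ((0 : Fin d → ℝ), (1:ℝ))) := by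
  have hGd : DifferentiableAt ℝ (Gd U) q := ((contDiff_Gd hU).differentiable htop0) q
  have hAd : DifferentiableAt ℝ (Ad U) q := ((contDiff_Ad hU).differentiable htop0) q
  have hcA : DifferentiableAt ℝ (fun p => conj (Ad U p)) q :=
    ((contDiff_conj (contDiff_Ad hU)).differentiable htop0) q
  refine (dd_mul (f := Gd U) (g := fun p => conj (Ad U p)) hGd hcA _).trans ?_
  rw [dd_conj hAd]

lemma dd_Ψd_eX (j : Fin d) (q : (Fin d → ℝ) × ℝ) :
    fderiv ℝ (Ψd U j) q ((Pi.single j 1 : Fin d → ℝ), (0:ℝ))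
      = Wc q * (Vd U q * conj (Vd U q))
        + (q.1 j : ℂ) * Wc q *
          (fderiv ℝ (Vd U) q ((Pi.single j 1 : Fin d → ℝ), (0:ℝ)) * conj (Vd U q)
            + Vd U q * conj (fderiv ℝ (Vd U) q ((Pi.single j 1 : Fin d → ℝ), (0:ℝ)))) := by
  have hco : DifferentiableAt ℝ (fun p : (Fin d → ℝ) × ℝ => ((p.1 j : ℝ) : ℂ)) q :=
    ((contDiff_coord j).differentiable htop0) q
  have hWcd : DifferentiableAt ℝ (Wc (d := d)) q := (contDiff_Wc.differentiable htop0) q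
  have hVd : DifferentiableAt ℝ (Vd U) q := ((contDiff_Vd hU).differentiable htop0) q
  have hcV : DifferentiableAt ℝ (fun p => conj (Vd U p)) q :=
    ((contDiff_conj (contDiff_Vd hU)).differentiable htop0) q
  have hfg : DifferentiableAt ℝ (fun p : (Fin d → ℝ) × ℝ => ((p.1 j : ℝ):ℂ) * Wc p) q :=
    hco.mul hWcd
  have hVV : DifferentiableAt ℝ (fun p => Vd U p * conj (Vd U p)) q := hVd.mul hcV
  refine (dd_mul (f := fun p : (Fin d → ℝ) × ℝ => ((p.1 j : ℝ):ℂ) * Wc p)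
    (g := fun p => Vd U p * conj (Vd U p)) hfg hVV _).trans ?_
  rw [dd_mul hco hWcd, dd_mul hVd hcV, dd_conj hVd, dd_coord, dd_Wc_eX]
  simp only [Pi.single_eq_same, Complex.ofReal_one, one_mul, mul_zero, add_zero]
  try ring

lemma key_pointwise (q : (Fin d → ℝ) × ℝ) :
    (fderiv ℝ (Gd U) q ((0 : Fin d → ℝ), (1:ℝ)) * conj (Ad U q)).re
      = (fderiv ℝ (Φd U) q ((0 : Fin d → ℝ), (1:ℝ))).re
        - ∑ j, (1/2 : ℝ) * (fderiv ℝ (Ψd U j) q ((Pi.single j 1 : Fin d → ℝ), (0:ℝ))).re := by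
  have halg : (Gd U q * conj (fderiv ℝ (Ad U) q ((0 : Fin d → ℝ), (1:ℝ)))).re
      = ∑ j, (1/2 : ℝ) * (fderiv ℝ (Ψd U j) q ((Pi.single j 1 : Fin d → ℝ), (0:ℝ))).re := by
    rw [dd_Ad_eA hU q]
    have hsplit : Gd U q * conj ((d:ℂ)/2 * Vd U q
          + ∑ j, (q.1 j : ℂ) * fderiv ℝ (Vd U) q ((Pi.single j 1 : Fin d → ℝ), (0:ℝ)))
        = Gd U q * conj ((d:ℂ)/2 * Vd U q)
          + ∑ j, Gd U q * conj ((q.1 j : ℂ)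
              * fderiv ℝ (Vd U) q ((Pi.single j 1 : Fin d → ℝ), (0:ℝ))) := by
      rw [map_add, map_sum, mul_add, Finset.mul_sum]
    rw [hsplit, Complex.add_re, Complex.re_sum]
    have hterm : ∀ j : Fin d,
        (Gd U q * conj ((q.1 j : ℂ)
            * fderiv ℝ (Vd U) q ((Pi.single j 1 : Fin d → ℝ), (0:ℝ)))).re
          = (1/2 : ℝ) * (((q.1 j : ℂ) * Wc q *
              (fderiv ℝ (Vd U) q ((Pi.single j 1 : Fin d → ℝ), (0:ℝ)) * conj (Vd U q)
                + Vd U q * conj (fderiv ℝ (Vd U) q ((Pi.single j 1 : Fin d → ℝ), (0:ℝ))))).re) := by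
      intro j
      have := re_alg (Real.exp (-q.2 ^ 2 / 2)) (q.1 j) (Vd U q)
        (fderiv ℝ (Vd U) q ((Pi.single j 1 : Fin d → ℝ), (0:ℝ)))
      simpa [Gd, Wc, mul_assoc] using this
    have hconst : (Gd U q * conj ((d:ℂ)/2 * Vd U q)).re
        = ∑ _j : Fin d, (1/2 : ℝ) * (Wc q * (Vd U q * conj (Vd U q))).re := by
      have hd2 : ((d:ℂ))/2 = (((d:ℝ)/2 : ℝ) : ℂ) := by push_cast; ring
      have := re_alg2 (Real.exp (-q.2 ^ 2 / 2)) ((d:ℝ)/2) (Vd U q)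
      rw [Finset.sum_const, Finset.card_univ, Fintype.card_fin]
      rw [hd2]
      have h2 : (Gd U q * conj ((((d:ℝ)/2 : ℝ) : ℂ) * Vd U q)).re
          = ((d:ℝ)/2) * ((Wc q * (Vd U q * conj (Vd U q))).re) := by
        simpa [Gd, Wc, mul_assoc] using this
      rw [h2]
      simp only [nsmul_eq_mul]
      try ring
    rw [hconst, ← Finset.sum_add_distrib]
    refine Finset.sum_congr rfl fun j _ => ?_
    rw [hterm j, dd_Ψd_eX hU j q, Complex.add_re]
    ring
  rw [dd_Φd_eA hU q, Complex.add_re, halg]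
  ring

end WithSmooth
section Integration

variable (hU : ContDiff ℝ (⊤:ℕ∞) U) (hUs : HasCompactSupport U)
include hU hUs

lemma main_integral :
    (∫ q : (Fin d → ℝ) × ℝ,
      fderiv ℝ (Gd U) q ((0 : Fin d → ℝ), (1:ℝ)) * conj (Ad U q)).re = 0 := by
  have hΦ1 : ContDiff ℝ 1 (Φd U) := (contDiff_Φd hU).of_le htop1
  have hΨ1 : ∀ j : Fin d, ContDiff ℝ 1 (Ψd U j) := fun j => (contDiff_Ψd hU j).of_le htop1
  have hcontX : Continuous fun q : (Fin d → ℝ) × ℝ =>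
      fderiv ℝ (Gd U) q ((0 : Fin d → ℝ), (1:ℝ)) * conj (Ad U q) :=
    (((contDiff_Gd hU).continuous_fderiv htop0).clm_apply continuous_const).mul
      (Complex.continuous_conj.comp (contDiff_Ad hU).continuous)
  have hcsX : HasCompactSupport fun q : (Fin d → ℝ) × ℝ =>
      fderiv ℝ (Gd U) q ((0 : Fin d → ℝ), (1:ℝ)) * conj (Ad U q) :=
    ((((supp_Gd hUs).fderiv (𝕜 := ℝ)).comp_left
      (g := fun L : ((Fin d → ℝ) × ℝ) →L[ℝ] ℂ => L ((0 : Fin d → ℝ), (1:ℝ))) rfl)).mul_right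
  have hintX : Integrable (fun q : (Fin d → ℝ) × ℝ =>
      fderiv ℝ (Gd U) q ((0 : Fin d → ℝ), (1:ℝ)) * conj (Ad U q)) :=
    hcontX.integrable_of_hasCompactSupport hcsX
  have hcontΦ : Continuous fun q : (Fin d → ℝ) × ℝ =>
      fderiv ℝ (Φd U) q ((0 : Fin d → ℝ), (1:ℝ)) :=
    ((contDiff_Φd hU).continuous_fderiv htop0).clm_apply continuous_const
  have hcsΦ : HasCompactSupport fun q : (Fin d → ℝ) × ℝ =>
      fderiv ℝ (Φd U) q ((0 : Fin d → ℝ), (1:ℝ)) :=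
    ((supp_Φd hUs).fderiv (𝕜 := ℝ)).comp_left
      (g := fun L : ((Fin d → ℝ) × ℝ) →L[ℝ] ℂ => L ((0 : Fin d → ℝ), (1:ℝ))) rfl
  have hintΦ : Integrable (fun q : (Fin d → ℝ) × ℝ =>
      fderiv ℝ (Φd U) q ((0 : Fin d → ℝ), (1:ℝ))) :=
    hcontΦ.integrable_of_hasCompactSupport hcsΦ
  have hintΨ : ∀ j : Fin d, Integrable (fun q : (Fin d → ℝ) × ℝ =>
      fderiv ℝ (Ψd U j) q ((Pi.single j 1 : Fin d → ℝ), (0:ℝ))) := by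
    intro j
    apply Continuous.integrable_of_hasCompactSupport
    · exact ((contDiff_Ψd hU j).continuous_fderiv htop0).clm_apply continuous_const
    · exact ((supp_Ψd hUs j).fderiv (𝕜 := ℝ)).comp_left
        (g := fun L : ((Fin d → ℝ) × ℝ) →L[ℝ] ℂ =>
          L ((Pi.single j 1 : Fin d → ℝ), (0:ℝ))) rfl
  have hintΦre : Integrable (fun q : (Fin d → ℝ) × ℝ =>
      (fderiv ℝ (Φd U) q ((0 : Fin d → ℝ), (1:ℝ))).re) := hintΦ.re
  have hintΨre : ∀ j : Fin d, Integrable (fun q : (Fin d → ℝ) × ℝ =>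
      (fderiv ℝ (Ψd U j) q ((Pi.single j 1 : Fin d → ℝ), (0:ℝ))).re) := fun j => (hintΨ j).re
  have h0 : ∫ q : (Fin d → ℝ) × ℝ,
      (fderiv ℝ (Gd U) q ((0 : Fin d → ℝ), (1:ℝ)) * conj (Ad U q)).re
      = (∫ q : (Fin d → ℝ) × ℝ,
          fderiv ℝ (Gd U) q ((0 : Fin d → ℝ), (1:ℝ)) * conj (Ad U q)).re :=
    integral_re hintX
  rw [← h0]
  have hptw : (fun q : (Fin d → ℝ) × ℝ =>
      (fderiv ℝ (Gd U) q ((0 : Fin d → ℝ), (1:ℝ)) * conj (Ad U q)).re)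
      = fun q => (fderiv ℝ (Φd U) q ((0 : Fin d → ℝ), (1:ℝ))).re
          - ∑ j, (1/2 : ℝ) * (fderiv ℝ (Ψd U j) q ((Pi.single j 1 : Fin d → ℝ), (0:ℝ))).re :=
    funext fun q => key_pointwise hU q
  rw [hptw]
  rw [integral_sub hintΦre
    (integrable_finset_sum _ fun j _ => ((hintΨre j).const_mul _))]
  rw [integral_finset_sum _ fun j _ => ((hintΨre j).const_mul _)]
  have hΦ0 : ∫ q : (Fin d → ℝ) × ℝ,
      (fderiv ℝ (Φd U) q ((0 : Fin d → ℝ), (1:ℝ))).re = 0 := by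
    have hre : ∫ q : (Fin d → ℝ) × ℝ, (fderiv ℝ (Φd U) q ((0 : Fin d → ℝ), (1:ℝ))).re
        = (∫ q : (Fin d → ℝ) × ℝ, fderiv ℝ (Φd U) q ((0 : Fin d → ℝ), (1:ℝ))).re :=
      integral_re hintΦ
    rw [hre, keyA hΦ1 (supp_Φd hUs)]
    simp
  have hΨ0 : ∀ j : Fin d, ∫ q : (Fin d → ℝ) × ℝ,
      (1/2 : ℝ) * (fderiv ℝ (Ψd U j) q ((Pi.single j 1 : Fin d → ℝ), (0:ℝ))).re = 0 := by
    intro j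
    have hre : ∫ q : (Fin d → ℝ) × ℝ,
        (fderiv ℝ (Ψd U j) q ((Pi.single j 1 : Fin d → ℝ), (0:ℝ))).re
        = (∫ q : (Fin d → ℝ) × ℝ,
            fderiv ℝ (Ψd U j) q ((Pi.single j 1 : Fin d → ℝ), (0:ℝ))).re :=
      integral_re (hintΨ j)
    rw [integral_const_mul, hre, keyX j (hΨ1 j) (supp_Ψd hUs j)]
    simp
  rw [hΦ0]
  rw [Finset.sum_congr rfl fun j _ => hΨ0 j]
  simp

end Integration


end Stmt14Aux

end Aux2

section FinalConversion
open ComplexConjugate Stmt14Aux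

variable {d : ℕ} {u : (Fin d → ℝ) → ℝ → ℂ}

lemma deriv_along {f : (Fin d → ℝ) × ℝ → ℂ} (hf : DifferentiableAt ℝ f (x, α)) :
    deriv (fun s => f (x, s)) α = fderiv ℝ f (x, α) ((0 : Fin d → ℝ), (1:ℝ)) := by
  have hc : HasDerivAt (fun s : ℝ => ((x : Fin d → ℝ), s)) ((0 : Fin d → ℝ), (1:ℝ)) α :=
    (hasDerivAt_const α x).prodMk (hasDerivAt_id α)
  exact (hf.hasFDerivAt.comp_hasDerivAt α hc).deriv

lemma pd_eq_V (hU : ContDiff ℝ (⊤:ℕ∞) (fun q : (Fin d → ℝ) × ℝ => u q.1 q.2))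
    (x : Fin d → ℝ) (s : ℝ) :
    pdA2 u x s = Vd (fun q : (Fin d → ℝ) × ℝ => u q.1 q.2) (x, s) :=
  deriv_along ((hU.differentiable htop0) (x, s))

lemma pd_eq_X (hU : ContDiff ℝ (⊤:ℕ∞) (fun q : (Fin d → ℝ) × ℝ => u q.1 q.2))
    (j : Fin d) (x : Fin d → ℝ) (α : ℝ) :
    pdX2 j u x α = Xd (fun q : (Fin d → ℝ) × ℝ => u q.1 q.2) j (x, α) := by
  have h1 : HasDerivAt (fun s => (Function.update x j s, α))
      ((Pi.single j 1 : Fin d → ℝ), (0:ℝ)) (x j) :=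
    (hasDerivAt_update x j (x j)).prodMk (hasDerivAt_const (x j) α)
  have h2 := (((hU.differentiable htop0) (Function.update x j (x j), α)).hasFDerivAt.comp_hasDerivAt
    (x j) h1)
  rw [Function.update_eq_self] at h2
  exact h2.deriv

end FinalConversion

open Stmt14Aux ComplexConjugate in
/-- Vanishing of the Ornstein–Uhlenbeck contribution to the partial virial identity:
`Re ∫ ∂_α(e^{-α²/2} ∂_α u) · conj((d/2) u + ∑_j x_j ∂_{x_j} u) dx dα = 0`. -/
theorem stmt14 (d : ℕ) (hd : 1 ≤ d) (u : (Fin d → ℝ) → ℝ → ℂ)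
    (hsmooth : ContDiff ℝ (⊤ : ℕ∞) (fun q : (Fin d → ℝ) × ℝ => u q.1 q.2))
    (hsupp : HasCompactSupport (fun q : (Fin d → ℝ) × ℝ => u q.1 q.2)) :
    (∫ q : (Fin d → ℝ) × ℝ,
        pdA2 (fun x α => (Real.exp (-α ^ 2 / 2) : ℂ) * pdA2 u x α) q.1 q.2
          * (starRingEnd ℂ) ((d : ℂ) / 2 * u q.1 q.2
            + ∑ j : Fin d, (q.1 j : ℂ) * pdX2 j u q.1 q.2)).re = 0 := by
  set U : (Fin d → ℝ) × ℝ → ℂ := fun q => u q.1 q.2 with hUdef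
  have hiden : (fun q : (Fin d → ℝ) × ℝ =>
      pdA2 (fun x α => (Real.exp (-α ^ 2 / 2) : ℂ) * pdA2 u x α) q.1 q.2
        * (starRingEnd ℂ) ((d : ℂ) / 2 * u q.1 q.2
          + ∑ j : Fin d, (q.1 j : ℂ) * pdX2 j u q.1 q.2))
      = fun q => fderiv ℝ (Gd U) q ((0 : Fin d → ℝ), (1:ℝ)) * conj (Ad U q) := by
    funext q
    have hleft : pdA2 (fun x α => (Real.exp (-α ^ 2 / 2) : ℂ) * pdA2 u x α) q.1 q.2
        = fderiv ℝ (Gd U) q ((0 : Fin d → ℝ), (1:ℝ)) := by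
      have hfun : (fun s => (Real.exp (-s ^ 2 / 2) : ℂ) * pdA2 u q.1 s)
          = fun s => Gd U (q.1, s) := by
        funext s
        rw [pd_eq_V hsmooth q.1 s]
        rfl
      show deriv (fun s => (Real.exp (-s ^ 2 / 2) : ℂ) * pdA2 u q.1 s) q.2
          = fderiv ℝ (Gd U) q ((0 : Fin d → ℝ), (1:ℝ))
      rw [hfun]
      have := deriv_along (f := Gd U) (x := q.1) (α := q.2)
        (((contDiff_Gd hsmooth).differentiable htop0) (q.1, q.2))
      simpa using this
    have hright : ((d : ℂ) / 2 * u q.1 q.2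
          + ∑ j : Fin d, (q.1 j : ℂ) * pdX2 j u q.1 q.2) = Ad U q := by
      simp only [Ad]
      congr 1
      refine Finset.sum_congr rfl fun j _ => ?_
      rw [pd_eq_X hsmooth j q.1 q.2]
    rw [hleft, hright]
  rw [hiden]
  exact main_integral hsmooth hsupp
end
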